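/- arXiv:2004.11874 — 5 statements merged into one kernel-verified Lean document; each statement's English description precedes it below -/
import Mathlib

section
/- If a simple graph G contains a pyramid, then G has an odd hole. More precisely, if P1, P2, P3 are the constituent paths of a pyramid in G, then some two of P1, P2, P3 have lengths of the same parity, and the union of two such paths (together with the edge between their base ends) induces an odd hole of G. -/
open SimpleGraph

namespace SOH

variable {V : Type*}

/-- A walk is "induced" if every edge of `G` between vertices of the walk is an edge
of the walk. -/
def IsInducedWalk (G : SimpleGraph V) {u v : V} (P : G.Walk u v) : Prop :=
  ∀ x y : V, x ∈ P.support → y ∈ P.support → G.Adj x y → P.toSubgraph.Adj x y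

/-- The interior of a path: its vertices other than the two ends. -/
def interior (G : SimpleGraph V) {u v : V} (P : G.Walk u v) : Set V :=
  {x | x ∈ P.support} \ {u, v}

/-- A hole: an induced cycle of length at least 4. -/
def IsHole (G : SimpleGraph V) {u : V} (c : G.Walk u u) : Prop :=
  c.IsCycle ∧ 4 ≤ c.length ∧ IsInducedWalk G c

/-- An odd hole: a hole of odd length. -/
def IsOddHole (G : SimpleGraph V) {u : V} (c : G.Walk u u) : Prop :=
  IsHole G c ∧ Odd c.length

/-- A shortest odd hole: an odd hole of minimum length among all odd holes of `G`. -/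
def IsShortestOddHole (G : SimpleGraph V) {u : V} (c : G.Walk u u) : Prop :=
  IsOddHole G c ∧ ∀ (w : V) (d : G.Walk w w), IsOddHole G d → c.length ≤ d.length

/-- A vertex `v` is `C`-major if there is no three-vertex path of `C` containing all
neighbours of `v` in `V(C)`. -/
def CMajor (G : SimpleGraph V) {u : V} (c : G.Walk u u) (v : V) : Prop :=
  ¬ ∃ x y z : V, c.toSubgraph.Adj x y ∧ c.toSubgraph.Adj y z ∧ x ≠ z ∧
      ∀ w ∈ c.support, G.Adj v w → (w = x ∨ w = y ∨ w = z)

/-- A big `C`-major vertex: a `C`-major vertex with at least four neighbours in `V(C)`. -/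
def BigCMajor (G : SimpleGraph V) {u : V} (c : G.Walk u u) (v : V) : Prop :=
  CMajor G c v ∧ 4 ≤ {w | w ∈ c.support ∧ G.Adj v w}.ncard

/-- A hole `c` is jewelled. -/
def Jewelled (G : SimpleGraph V) {u : V} (c : G.Walk u u) : Prop :=
  (∃ c1 c2 c4 c5 c3 : V, ([c1, c2, c4, c5] : List V).Nodup ∧
      c.toSubgraph.Adj c1 c2 ∧ c.toSubgraph.Adj c2 c4 ∧ c.toSubgraph.Adj c4 c5 ∧
      G.Adj c3 c1 ∧ G.Adj c3 c5) ∨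
  (∃ c1 c3 c5 c2 c4 : V, ([c1, c3, c5] : List V).Nodup ∧
      c.toSubgraph.Adj c1 c3 ∧ c.toSubgraph.Adj c3 c5 ∧
      c2 ∉ c.support ∧ c4 ∉ c.support ∧ c2 ≠ c4 ∧
      G.Adj c1 c2 ∧ G.Adj c2 c4 ∧ G.Adj c4 c5 ∧
      ¬ G.Adj c1 c4 ∧ ¬ G.Adj c2 c5 ∧ ¬ G.Adj c1 c5)

/-- A pyramid in `G`, with apex `apex`, base `{b1, b2, b3}` and constituent paths
`P1, P2, P3`. -/
structure Pyramid (G : SimpleGraph V) where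
  apex : V
  b1 : V
  b2 : V
  b3 : V
  P1 : G.Walk apex b1
  P2 : G.Walk apex b2
  P3 : G.Walk apex b3
  distinct : ([apex, b1, b2, b3] : List V).Nodup
  isPath1 : P1.IsPath
  isPath2 : P2.IsPath
  isPath3 : P3.IsPath
  induced1 : IsInducedWalk G P1
  induced2 : IsInducedWalk G P2
  induced3 : IsInducedWalk G P3
  adj12 : G.Adj b1 b2
  adj13 : G.Adj b1 b3
  adj23 : G.Adj b2 b3
  twoLong : (2 ≤ P1.length ∧ 2 ≤ P2.length) ∨ (2 ≤ P1.length ∧ 2 ≤ P3.length) ∨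
      (2 ≤ P2.length ∧ 2 ≤ P3.length)
  disj12 : {x | x ∈ P1.support} ∩ {x | x ∈ P2.support} = {apex}
  disj13 : {x | x ∈ P1.support} ∩ {x | x ∈ P3.support} = {apex}
  disj23 : {x | x ∈ P2.support} ∩ {x | x ∈ P3.support} = {apex}
  edges12 : ∀ x y : V, x ∈ P1.support → y ∈ P2.support → x ≠ apex → y ≠ apex →
      G.Adj x y → x = b1 ∧ y = b2
  edges13 : ∀ x y : V, x ∈ P1.support → y ∈ P3.support → x ≠ apex → y ≠ apex →
      G.Adj x y → x = b1 ∧ y = b3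
  edges23 : ∀ x y : V, x ∈ P2.support → y ∈ P3.support → x ≠ apex → y ≠ apex →
      G.Adj x y → x = b2 ∧ y = b3

/-- The vertex set of a pyramid. -/
def Pyramid.verts {G : SimpleGraph V} (H : Pyramid G) : Set V :=
  {x | x ∈ H.P1.support} ∪ {x | x ∈ H.P2.support} ∪ {x | x ∈ H.P3.support}

/-- The closed walk `apex-P1-b1-b2-P2-apex` associated with a pyramid. -/
def Pyramid.hole {G : SimpleGraph V} (H : Pyramid G) : G.Walk H.apex H.apex :=
  H.P1.append (Walk.cons H.adj12 H.P2.reverse)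

/-- A great pyramid: the hole `apex-P1-b1-b2-P2-apex` is a shortest odd hole and `P3` is
strictly shorter than `P1` and `P2`. -/
structure GreatPyramid (G : SimpleGraph V) extends Pyramid G where
  holeShortest : IsShortestOddHole G toPyramid.hole
  short31 : toPyramid.P3.length < toPyramid.P1.length
  short32 : toPyramid.P3.length < toPyramid.P2.length

/-- The heart of a great pyramid: `V(P3) \ {apex}`. -/
def GreatPyramid.heart {G : SimpleGraph V} (H : GreatPyramid G) : Set V :=
  {x | x ∈ H.P3.support} \ {H.apex}

/-- An optimal great pyramid: one of minimum height (= length of `P3`). -/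
def GreatPyramid.Optimal {G : SimpleGraph V} (H : GreatPyramid G) : Prop :=
  ∀ H' : GreatPyramid G, H.P3.length ≤ H'.P3.length

/-- `L1, L2` are the two subpaths of the cycle `c` joining `u` and `v`. -/
def IsSplit (G : SimpleGraph V) {w u v : V} (c : G.Walk w w) (L1 L2 : G.Walk u v) : Prop :=
  L1.IsPath ∧ L2.IsPath ∧
  {x | x ∈ L1.support} ∩ {x | x ∈ L2.support} = {u, v} ∧
  {x | x ∈ L1.support} ∪ {x | x ∈ L2.support} = {x | x ∈ c.support} ∧
  (∀ e ∈ L1.edges, e ∈ c.edges) ∧ (∀ e ∈ L2.edges, e ∈ c.edges) ∧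
  L1.length + L2.length = c.length

/-- A shortcut for a (shortest odd) hole `c`: a path joining two distinct nonadjacent
vertices of `c`, shorter than both arcs of `c` between them, containing no big
`c`-major vertex. -/
def IsShortcut (G : SimpleGraph V) {w u v : V} (c : G.Walk w w) (P : G.Walk u v) : Prop :=
  u ∈ c.support ∧ v ∈ c.support ∧ u ≠ v ∧ ¬ G.Adj u v ∧ P.IsPath ∧
  (∀ L1 L2 : G.Walk u v, IsSplit G c L1 L2 → P.length < min L1.length L2.length) ∧
  ∀ x ∈ P.support, ¬ BigCMajor G c x


lemma pair_oddHole (G : SimpleGraph V) {a c1 c2 : V}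
    (P1 : G.Walk a c1) (P2 : G.Walk a c2)
    (hP1 : P1.IsPath) (hP2 : P2.IsPath)
    (hI1 : IsInducedWalk G P1) (hI2 : IsInducedWalk G P2)
    (hadj : G.Adj c1 c2)
    (hne1 : a ≠ c1) (hne2 : a ≠ c2)
    (hdisj : {x | x ∈ P1.support} ∩ {x | x ∈ P2.support} = {a})
    (hedges : ∀ x y : V, x ∈ P1.support → y ∈ P2.support → x ≠ a → y ≠ a →
      G.Adj x y → x = c1 ∧ y = c2)
    (hlen : 3 ≤ P1.length + P2.length)
    (hpar : P1.length % 2 = P2.length % 2) :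
    IsOddHole G (P1.append (Walk.cons hadj P2.reverse)) := by
  set W := P1.append (Walk.cons hadj P2.reverse) with hW
  have hboth : ∀ x, x ∈ P1.support → x ∈ P2.support → x = a := by
    intro x h1 h2
    have : x ∈ ({a} : Set V) := hdisj ▸ ⟨h1, h2⟩
    exact this
  have hsupp : W.support = P1.support ++ P2.reverse.support := by
    rw [hW, Walk.support_append, Walk.support_cons, List.tail_cons]
  have hmem : ∀ x, x ∈ W.support ↔ x ∈ P1.support ∨ x ∈ P2.support := by
    intro x
    rw [hsupp, List.mem_append, Walk.support_reverse, List.mem_reverse]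
  have hlenW : W.length = P1.length + P2.length + 1 := by
    rw [hW, Walk.length_append, Walk.length_cons, Walk.length_reverse]; omega
  have hc1P1 : c1 ∉ P2.support := fun h => hne1 (hboth c1 P1.end_mem_support h).symm
  have hc2P2 : c2 ∉ P1.support := fun h => hne2 (hboth c2 h P2.end_mem_support).symm
  have htrail : W.IsTrail := by
    constructor
    rw [hW, Walk.edges_append, Walk.edges_cons, Walk.edges_reverse]
    refine List.Nodup.append hP1.isTrail.edges_nodup ?_ ?_
    · refine List.Nodup.cons ?_ (List.nodup_reverse.mpr hP2.isTrail.edges_nodup)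
      intro h
      rw [List.mem_reverse] at h
      exact hc1P1 (Walk.fst_mem_support_of_mem_edges P2 h)
    · intro e he he'
      rcases List.mem_cons.mp he' with rfl | he'
      · exact hc2P2 (Walk.snd_mem_support_of_mem_edges P1 he)
      · rw [List.mem_reverse] at he'
        induction e with
        | h x y =>
          have hx := hboth x (Walk.fst_mem_support_of_mem_edges P1 he)
            (Walk.fst_mem_support_of_mem_edges P2 he')
          have hy := hboth y (Walk.snd_mem_support_of_mem_edges P1 he)
            (Walk.snd_mem_support_of_mem_edges P2 he')
          have := G.not_isDiag_of_mem_edgeSet (P1.edges_subset_edgeSet he)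
          simp [hx, hy] at this
  have haP1tail : a ∉ P1.support.tail := by
    have := hP1.support_nodup
    rw [P1.support_eq_cons] at this
    exact (List.nodup_cons.mp this).1
  have hcycle : W.IsCycle := by
    refine ⟨⟨htrail, ?_⟩, ?_⟩
    · intro h
      have := congrArg Walk.length h
      rw [hlenW] at this
      simp at this
    · have h1 : W.support.tail = P1.support.tail ++ P2.reverse.support := by
        rw [hsupp]
        conv_lhs => rw [P1.support_eq_cons]
        rfl
      rw [h1]
      refine List.Nodup.append hP1.support_nodup.tail
        (by rw [Walk.support_reverse]; exact List.nodup_reverse.mpr hP2.support_nodup) ?_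
      intro x hx hx'
      rw [Walk.support_reverse, List.mem_reverse] at hx'
      have : x = a := hboth x (List.mem_of_mem_tail hx) hx'
      exact haP1tail (this ▸ hx)
  have hsub : W.toSubgraph = P1.toSubgraph ⊔ (G.subgraphOfAdj hadj ⊔ P2.toSubgraph) := by
    rw [hW, Walk.toSubgraph_append]
    congr 1
    show G.subgraphOfAdj hadj ⊔ P2.reverse.toSubgraph = _
    rw [Walk.toSubgraph_reverse]
  have hinduced : IsInducedWalk G W := by
    intro x y hx hy hxy
    rw [hmem] at hx hy
    rw [hsub]
    rcases hx with hx | hx <;> rcases hy with hy | hy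
    · exact Or.inl (hI1 x y hx hy hxy)
    · -- x ∈ P1, y ∈ P2
      by_cases hxa : x = a
      · subst hxa
        exact Or.inr (Or.inr (hI2 x y P2.start_mem_support hy hxy))
      by_cases hya : y = a
      · subst hya
        exact Or.inl (hI1 x y hx P1.start_mem_support hxy)
      obtain ⟨rfl, rfl⟩ := hedges x y hx hy hxa hya hxy
      exact Or.inr (Or.inl (by simp))
    · -- x ∈ P2, y ∈ P1
      by_cases hxa : x = a
      · subst hxa
        exact Or.inl (hI1 x y P1.start_mem_support hy hxy)
      by_cases hya : y = a
      · subst hya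
        exact Or.inr (Or.inr (hI2 x y hx P2.start_mem_support hxy))
      obtain ⟨rfl, rfl⟩ := hedges y x hy hx hya hxa hxy.symm
      exact Or.inr (Or.inl (by simp))
    · exact Or.inr (Or.inr (hI2 x y hx hy hxy))
  exact ⟨⟨hcycle, by omega, hinduced⟩, by rw [hlenW, Nat.odd_iff]; omega⟩

/-- if `G` contains a pyramid with constituent paths `P1, P2, P3`, then some
two of `P1, P2, P3` have lengths of the same parity, and the union of two such paths
together with the edge between their base ends induces an odd hole of `G`. -/
theorem pyramid_gives_oddHole {V : Type*} (G : SimpleGraph V) (H : Pyramid G) :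
    (H.P1.length % 2 = H.P2.length % 2 ∧
      IsOddHole G (H.P1.append (Walk.cons H.adj12 H.P2.reverse))) ∨
    (H.P1.length % 2 = H.P3.length % 2 ∧
      IsOddHole G (H.P1.append (Walk.cons H.adj13 H.P3.reverse))) ∨
    (H.P2.length % 2 = H.P3.length % 2 ∧
      IsOddHole G (H.P2.append (Walk.cons H.adj23 H.P3.reverse))) := by
  have hd := H.distinct
  simp only [List.nodup_cons, List.mem_cons, List.mem_singleton, List.not_mem_nil,
    or_false, not_or, List.nodup_nil, and_true] at hd
  obtain ⟨⟨hab1, hab2, hab3⟩, ⟨h12, h13⟩, h23⟩ := hd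
  have l1 : 1 ≤ H.P1.length :=
    Nat.pos_of_ne_zero fun h => hab1 (Walk.eq_of_length_eq_zero h)
  have l2 : 1 ≤ H.P2.length :=
    Nat.pos_of_ne_zero fun h => hab2 (Walk.eq_of_length_eq_zero h)
  have l3 : 1 ≤ H.P3.length :=
    Nat.pos_of_ne_zero fun h => hab3 (Walk.eq_of_length_eq_zero h)
  have htwo := H.twoLong
  by_cases hp12 : H.P1.length % 2 = H.P2.length % 2
  · exact Or.inl ⟨hp12, pair_oddHole G H.P1 H.P2 H.isPath1 H.isPath2 H.induced1 H.induced2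
      H.adj12 hab1 hab2 H.disj12 H.edges12 (by omega) hp12⟩
  by_cases hp13 : H.P1.length % 2 = H.P3.length % 2
  · exact Or.inr (Or.inl ⟨hp13, pair_oddHole G H.P1 H.P3 H.isPath1 H.isPath3 H.induced1
      H.induced3 H.adj13 hab1 hab3 H.disj13 H.edges13 (by omega) hp13⟩)
  have hp23 : H.P2.length % 2 = H.P3.length % 2 := by omega
  exact Or.inr (Or.inr ⟨hp23, pair_oddHole G H.P2 H.P3 H.isPath2 H.isPath3 H.induced2
    H.induced3 H.adj23 hab2 hab3 H.disj23 H.edges23 (by omega) hp23⟩)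


end SOH
end

section
/- Let C be a shortest odd hole of a simple graph G, and let v ∈ V(G) be a C-major vertex with at most three neighbours in V(C). Then v has exactly three neighbours in V(C), and exactly one pair of these three neighbours is adjacent. -/
open SimpleGraph

namespace SOH

variable {V : Type*}

/-!
Call the arcs of `C` between consecutive neighbours of `v` its sectors. If a sector `P` is odd
with nonadjacent ends, then `P` closed up through `v` is an odd hole of length `|P| + 2`, so by
minimality the rest of `C` is a three-vertex path; it contains every neighbour of `v`, against
`v` being `C`-major. Hence an odd sector has adjacent ends, which in the induced cycle `C` means
that it is a single edge. Being `C`-major, `v` has two nonadjacent neighbours on `C`, and a third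
one, since otherwise one of the two sectors between them would be odd. With exactly three
sectors, `|C|` odd and `|C| ≥ 5`, exactly one sector is odd.
-/

section

open Walk

variable {G : SimpleGraph V} {u x z a b v : V}

lemma _root_.Set.insert_insert_singleton_rotate {α : Type*} (x a b : α) :
    ({x, a, b} : Set α) = {a, b, x} := by
  rw [Set.insert_comm, Set.pair_comm]

lemma _root_.SimpleGraph.Walk.exists_eq_append_append {w y : V} (c : G.Walk x w)
    (hy : y ∈ c.support) (hz : z ∈ c.support) :
    ∃ (a b : V) (A₁ : G.Walk x a) (A₂ : G.Walk a b) (A₃ : G.Walk b w),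
      (a = y ∧ b = z ∨ a = z ∧ b = y) ∧ c = A₁.append (A₂.append A₃) := by
  classical
  rcases (mem_support_append_iff _ _).1 (c.take_spec hy ▸ hz) with hz' | hz'
  · exact ⟨z, y, (c.takeUntil y hy).takeUntil z hz', (c.takeUntil y hy).dropUntil z hz',
      c.dropUntil y hy, Or.inr ⟨rfl, rfl⟩, by rw [append_assoc, take_spec, take_spec]⟩
  · exact ⟨y, z, c.takeUntil y hy, (c.dropUntil y hy).takeUntil z hz',
      (c.dropUntil y hy).dropUntil z hz', Or.inl ⟨rfl, rfl⟩, by rw [take_spec, take_spec]⟩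

lemma _root_.SimpleGraph.Walk.exists_eq_cons_cons_nil {q : G.Walk z x} (hq : q.length = 2) :
    ∃ (m : V) (h₁ : G.Adj z m) (h₂ : G.Adj m x), q = cons h₁ (cons h₂ nil) := by
  rcases q with _ | ⟨h₁, _ | ⟨h₂, _ | ⟨_, _⟩⟩⟩ <;> simp_all

lemma _root_.SimpleGraph.Walk.IsCycle.eq_or_eq_of_mem_support_append {p : G.Walk x z}
    {q : G.Walk z x} (h : (p.append q).IsCycle) (hp : a ∈ p.support) (hq : a ∈ q.support) :
    a = x ∨ a = z := by
  have hnd := h.support_nodup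
  rw [tail_support_append, List.nodup_append'] at hnd
  rw [← cons_tail_support, List.mem_cons] at hp hq
  rcases hp with rfl | hp
  · exact Or.inl rfl
  rcases hq with rfl | hq
  · exact Or.inr rfl
  exact absurd hq (hnd.2.2 hp)

lemma _root_.SimpleGraph.Walk.IsCycle.append_comm {p : G.Walk x z} {q : G.Walk z x}
    (h : (p.append q).IsCycle) : (q.append p).IsCycle := by
  rw [isCycle_def, isTrail_def, edges_append, tail_support_append] at h ⊢
  refine ⟨List.nodup_append_comm.1 h.1, fun hnil => h.2.1 ?_, List.nodup_append_comm.1 h.2.2⟩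
  have := congrArg length hnil
  rw [length_append, length_nil] at this
  exact (length_eq_zero_iff.1 (by rw [length_append]; omega)).eq_nil

lemma _root_.SimpleGraph.Walk.toSubgraph_append_comm (p : G.Walk x z) (q : G.Walk z x) :
    (p.append q).toSubgraph = (q.append p).toSubgraph := by
  rw [toSubgraph_append, toSubgraph_append, sup_comm]

lemma _root_.SimpleGraph.Walk.mem_support_append_comm (p : G.Walk x z) (q : G.Walk z x) :
    a ∈ (p.append q).support ↔ a ∈ (q.append p).support := by
  rw [mem_support_append_iff, mem_support_append_iff, or_comm]

lemma IsShortestOddHole.isCycle {c : G.Walk u u} (h : IsShortestOddHole G c) : c.IsCycle :=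
  h.1.1.1

lemma IsShortestOddHole.isInducedWalk {c : G.Walk u u} (h : IsShortestOddHole G c) :
    IsInducedWalk G c :=
  h.1.1.2.2

lemma IsShortestOddHole.four_le_length {c : G.Walk u u} (h : IsShortestOddHole G c) :
    4 ≤ c.length :=
  h.1.1.2.1

lemma IsShortestOddHole.odd_length {c : G.Walk u u} (h : IsShortestOddHole G c) :
    Odd c.length :=
  h.1.2

lemma IsInducedWalk.append_comm {p : G.Walk x z} {q : G.Walk z x}
    (h : IsInducedWalk G (p.append q)) : IsInducedWalk G (q.append p) := by
  intro a b ha hb hab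
  rw [← toSubgraph_append_comm]
  exact h a b ((mem_support_append_comm p q).2 ha) ((mem_support_append_comm p q).2 hb) hab

lemma IsShortestOddHole.append_comm {p : G.Walk x z} {q : G.Walk z x}
    (h : IsShortestOddHole G (p.append q)) : IsShortestOddHole G (q.append p) := by
  obtain ⟨⟨⟨hcyc, hlen, hind⟩, hodd⟩, hmin⟩ := h
  have hlen' : (q.append p).length = (p.append q).length := by
    rw [length_append, length_append, Nat.add_comm]
  exact ⟨⟨⟨hcyc.append_comm, hlen' ▸ hlen, hind.append_comm⟩, hlen' ▸ hodd⟩, hlen' ▸ hmin⟩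

lemma CMajor.append_comm {p : G.Walk x z} {q : G.Walk z x} (h : CMajor G (p.append q) v) :
    CMajor G (q.append p) v := by
  rintro ⟨a, b, c, hab, hbc, hac, hN⟩
  rw [← toSubgraph_append_comm] at hab hbc
  exact h ⟨a, b, c, hab, hbc, hac, fun w hw => hN w ((mem_support_append_comm p q).1 hw)⟩

lemma IsInducedWalk.of_append_left {p : G.Walk x z} {q : G.Walk z x}
    (h : IsInducedWalk G (p.append q)) (hc : (p.append q).IsCycle) (hxz : ¬ G.Adj x z) :
    IsInducedWalk G p := by
  intro a b ha hb hab
  have hadj := h a b ((mem_support_append_iff p q).2 (Or.inl ha))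
    ((mem_support_append_iff p q).2 (Or.inl hb)) hab
  rw [toSubgraph_append, Subgraph.sup_adj] at hadj
  refine hadj.resolve_right fun hq => ?_
  rcases hc.eq_or_eq_of_mem_support_append ha ((mem_verts_toSubgraph q).1 hq.fst_mem)
    with rfl | rfl <;>
  rcases hc.eq_or_eq_of_mem_support_append hb ((mem_verts_toSubgraph q).1 hq.snd_mem)
    with rfl | rfl
  exacts [hab.ne rfl, hxz hab, hxz hab.symm, hab.ne rfl]

lemma adj_iff_length_eq_one {p : G.Walk x z} {q : G.Walk z x} (hc : (p.append q).IsCycle)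
    (hind : IsInducedWalk G (p.append q)) (hq : 2 ≤ q.length) :
    G.Adj x z ↔ p.length = 1 := by
  refine ⟨fun h => ?_, adj_of_length_eq_one⟩
  have hedge := hind x z (start_mem_support _)
    ((mem_support_append_iff p q).2 (Or.inl p.end_mem_support)) h
  rw [adj_toSubgraph_iff_mem_edges, edges_append, List.mem_append] at hedge
  rcases hedge with hp | hq'
  · exact (hc.isPath_of_append_left (not_nil_of_ne h.ne.symm)).length_eq_one_of_mem_edges hp
  · have := (hc.append_comm.isPath_of_append_left (not_nil_of_ne h.ne)).length_eq_one_of_mem_edges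
      (Sym2.eq_swap ▸ hq')
    omega

lemma isHole_cons_concat {p : G.Walk x z} (hp : p.IsPath) (hind : IsInducedWalk G p)
    (hxz : x ≠ z) (hnadj : ¬ G.Adj x z) (hvp : v ∉ p.support) (hvx : G.Adj v x)
    (hvz : G.Adj v z) (hN : ∀ w ∈ p.support, G.Adj v w → w = x ∨ w = z) :
    IsHole G (cons hvx (p.concat hvz.symm)) := by
  have hlen : 2 ≤ p.length := by
    have h0 : p.length ≠ 0 := fun h => hxz (eq_of_length_eq_zero h)
    have h1 : p.length ≠ 1 := fun h => hnadj (adj_of_length_eq_one h)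
    omega
  refine ⟨(cons_isCycle_iff _ hvx).2 ⟨hp.concat hvp hvz.symm, ?_⟩, by simp; omega, ?_⟩
  · rw [edges_concat, List.concat_eq_append, List.mem_append, List.mem_singleton]
    rintro (h | h)
    · exact hvp (p.fst_mem_support_of_mem_edges h)
    · rcases Sym2.eq_iff.1 h with ⟨-, h⟩ | ⟨-, h⟩
      exacts [hvx.ne h.symm, hxz h]
  · intro a b ha hb hab
    simp only [support_cons, support_concat, List.mem_cons, List.mem_append, List.not_mem_nil,
      or_false] at ha hb
    replace ha : a = v ∨ a ∈ p.support := by tauto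
    replace hb : b = v ∨ b ∈ p.support := by tauto
    rw [adj_toSubgraph_iff_mem_edges, edges_cons, edges_concat, List.concat_eq_append]
    simp only [List.mem_cons, List.mem_append]
    rcases ha with rfl | ha <;> rcases hb with rfl | hb
    · exact absurd rfl hab.ne
    · rcases hN b hb hab with rfl | rfl <;> simp
    · rcases hN a ha hab.symm with rfl | rfl <;> simp [Sym2.eq_swap]
    · exact Or.inr (Or.inl (adj_toSubgraph_iff_mem_edges.1 (hind a b ha hb hab)))

lemma CMajor.exists_adj_ne_and_not_toSubgraph_adj {c : G.Walk u u} (hv : CMajor G c v)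
    (hc : c.IsCycle) (ha : a ∈ c.support) :
    ∃ w ∈ c.support, G.Adj v w ∧ w ≠ a ∧ ¬ c.toSubgraph.Adj a w := by
  by_contra! h
  obtain ⟨p, q, hpq, hnbrs⟩ := Set.ncard_eq_two.1 (hc.ncard_neighborSet_toSubgraph_eq_two ha)
  have hp : c.toSubgraph.Adj a p := show p ∈ c.toSubgraph.neighborSet a by simp [hnbrs]
  have hq : c.toSubgraph.Adj a q := show q ∈ c.toSubgraph.neighborSet a by simp [hnbrs]
  refine hv ⟨p, a, q, hp.symm, hq, hpq, fun w hw hvw => ?_⟩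
  by_cases hwa : w = a
  · exact Or.inr (Or.inl hwa)
  have : w ∈ c.toSubgraph.neighborSet a := h w hw hvw hwa
  rw [hnbrs] at this
  rcases this with rfl | rfl
  · exact Or.inl rfl
  · exact Or.inr (Or.inr rfl)

lemma CMajor.notMem_support {c : G.Walk u u} (hv : CMajor G c v) (hc : c.IsCycle)
    (hind : IsInducedWalk G c) : v ∉ c.support := fun hvc => by
  obtain ⟨w, hw, hvw, -, hnadj⟩ := hv.exists_adj_ne_and_not_toSubgraph_adj hc hvc
  exact hnadj (hind v w hvc hw hvw)

lemma adj_of_odd_sector {p : G.Walk x z} {q : G.Walk z x} (hc : IsShortestOddHole G (p.append q))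
    (hv : CMajor G (p.append q) v) (hvx : G.Adj v x) (hvz : G.Adj v z) (hxz : x ≠ z)
    (hN : ∀ w ∈ p.support, G.Adj v w → w = x ∨ w = z) (hodd : Odd p.length) : G.Adj x z := by
  obtain ⟨⟨⟨hcyc, -, hind⟩, -⟩, hmin⟩ := hc
  by_contra hnadj
  have hvp : v ∉ p.support := fun h =>
    hv.notMem_support hcyc hind ((mem_support_append_iff p q).2 (Or.inl h))
  have hhole := isHole_cons_concat (hcyc.isPath_of_append_left (not_nil_of_ne hxz.symm))
    (hind.of_append_left hcyc hnadj) hxz hnadj hvp hvx hvz hN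
  have hle := hmin v _ ⟨hhole, by simpa [Nat.odd_add_one] using hodd⟩
  have hq0 : q.length ≠ 0 := fun h => hxz (eq_of_length_eq_zero h).symm
  have hq1 : q.length ≠ 1 := fun h => hnadj (adj_of_length_eq_one h).symm
  simp only [length_append, length_cons, length_concat] at hle
  obtain ⟨m, h₁, h₂, rfl⟩ := exists_eq_cons_cons_nil (show q.length = 2 by omega)
  refine hv ⟨z, m, x, ?_, ?_, hxz.symm, fun w hw hvw => ?_⟩
  · simp [toSubgraph_append]
  · simp [toSubgraph_append]
  rcases (mem_support_append_iff _ _).1 hw with hw | hw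
  · rcases hN w hw hvw with rfl | rfl <;> simp
  · simpa using hw

lemma CMajor.exists_adj_ne_ne {c : G.Walk x x} (hc : IsShortestOddHole G c)
    (hv : CMajor G c v) (hvx : G.Adj v x) (hz : z ∈ c.support) (hvz : G.Adj v z) (hxz : x ≠ z)
    (hnadj : ¬ G.Adj x z) : ∃ y ∈ c.support, G.Adj v y ∧ y ≠ x ∧ y ≠ z := by
  classical
  by_contra! h
  have hN : ∀ w ∈ c.support, G.Adj v w → w = x ∨ w = z :=
    fun w hw hvw => or_iff_not_imp_left.2 (h w hw hvw)
  rw [← c.take_spec hz] at hc hv hN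
  rcases Nat.even_or_odd (c.takeUntil z hz).length with heven | hodd
  · have hodd : Odd (c.dropUntil z hz).length := by
      have := hc.odd_length
      rw [length_append] at this
      exact (Nat.odd_add'.1 this).2 heven
    exact hnadj (adj_of_odd_sector hc.append_comm hv.append_comm hvz hvx hxz.symm
      (fun w hw hvw => (hN w ((mem_support_append_iff _ _).2 (Or.inr hw)) hvw).symm) hodd).symm
  · exact hnadj (adj_of_odd_sector hc hv hvx hvz hxz
      (fun w hw => hN w ((mem_support_append_iff _ _).2 (Or.inl hw))) hodd)

section ThreeArcs

variable {A₁ : G.Walk x a} {A₂ : G.Walk a b} {A₃ : G.Walk b x}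

lemma rotate_arcs (hc : IsShortestOddHole G (A₁.append (A₂.append A₃)))
    (hv : CMajor G (A₁.append (A₂.append A₃)) v)
    (hN : {w | w ∈ (A₁.append (A₂.append A₃)).support ∧ G.Adj v w} = {x, a, b}) :
    IsShortestOddHole G (A₂.append (A₃.append A₁)) ∧ CMajor G (A₂.append (A₃.append A₁)) v ∧
      {w | w ∈ (A₂.append (A₃.append A₁)).support ∧ G.Adj v w} = {a, b, x} := by
  rw [append_assoc]
  refine ⟨hc.append_comm, hv.append_comm, ?_⟩
  simp_rw [← mem_support_append_comm A₁ (A₂.append A₃)]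
  rw [hN, Set.insert_insert_singleton_rotate]

lemma adj_iff_length_eq_one_and_length_eq_one_of_odd
    (hc : IsShortestOddHole G (A₁.append (A₂.append A₃)))
    (hv : CMajor G (A₁.append (A₂.append A₃)) v)
    (hN : {w | w ∈ (A₁.append (A₂.append A₃)).support ∧ G.Adj v w} = {x, a, b})
    (hxa : x ≠ a) (hab : a ≠ b) (hbx : b ≠ x) :
    (G.Adj x a ↔ A₁.length = 1) ∧ (Odd A₁.length → A₁.length = 1) := by
  have hcyc := hc.isCycle
  have hmem (w : V) :
      w ∈ (A₁.append (A₂.append A₃)).support ∧ G.Adj v w ↔ w = x ∨ w = a ∨ w = b := by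
    simpa using Set.ext_iff.1 hN w
  have hlen : 2 ≤ (A₂.append A₃).length := by
    have h₂ : A₂.length ≠ 0 := fun h => hab (eq_of_length_eq_zero h)
    have h₃ : A₃.length ≠ 0 := fun h => hbx (eq_of_length_eq_zero h)
    rw [length_append]
    omega
  have hadj := adj_iff_length_eq_one hcyc hc.isInducedWalk hlen
  refine ⟨hadj, fun hodd => hadj.1 (adj_of_odd_sector hc hv ((hmem x).2 (Or.inl rfl)).2
    ((hmem a).2 (Or.inr (Or.inl rfl))).2 hxa (fun w hw hvw => ?_) hodd)⟩
  rcases (hmem w).1 ⟨(mem_support_append_iff _ _).2 (Or.inl hw), hvw⟩ with rfl | rfl | rfl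
  · exact Or.inl rfl
  · exact Or.inr rfl
  · exact hcyc.eq_or_eq_of_mem_support_append hw
      ((mem_support_append_iff _ _).2 (Or.inl A₂.end_mem_support))

lemma exists_adj_of_three_arcs (hc : IsShortestOddHole G (A₁.append (A₂.append A₃)))
    (hv : CMajor G (A₁.append (A₂.append A₃)) v)
    (hN : {w | w ∈ (A₁.append (A₂.append A₃)).support ∧ G.Adj v w} = {x, a, b})
    (hxa : x ≠ a) (hab : a ≠ b) (hbx : b ≠ x) :
    ∃ x' y' z' : V, x' ≠ y' ∧ x' ≠ z' ∧ y' ≠ z' ∧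
      {w | w ∈ (A₁.append (A₂.append A₃)).support ∧ G.Adj v w} = {x', y', z'} ∧
      G.Adj x' y' ∧ ¬ G.Adj x' z' ∧ ¬ G.Adj y' z' := by
  obtain ⟨hc₂, hv₂, hN₂⟩ := rotate_arcs hc hv hN
  obtain ⟨hc₃, hv₃, hN₃⟩ := rotate_arcs hc₂ hv₂ hN₂
  obtain ⟨e₁, o₁⟩ := adj_iff_length_eq_one_and_length_eq_one_of_odd hc hv hN hxa hab hbx
  obtain ⟨e₂, o₂⟩ := adj_iff_length_eq_one_and_length_eq_one_of_odd hc₂ hv₂ hN₂ hab hbx hxa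
  obtain ⟨e₃, o₃⟩ := adj_iff_length_eq_one_and_length_eq_one_of_odd hc₃ hv₃ hN₃ hbx hxa hab
  have hodd := hc.odd_length
  have hlen := hc.four_le_length
  simp only [length_append] at hodd hlen
  rw [Nat.odd_iff] at hodd o₁ o₂ o₃
  have hrot := Set.insert_insert_singleton_rotate x a b
  rcases (by omega : A₁.length = 1 ∧ A₂.length ≠ 1 ∧ A₃.length ≠ 1 ∨
      A₁.length ≠ 1 ∧ A₂.length = 1 ∧ A₃.length ≠ 1 ∨
      A₁.length ≠ 1 ∧ A₂.length ≠ 1 ∧ A₃.length = 1) with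
    ⟨l₁, l₂, l₃⟩ | ⟨l₁, l₂, l₃⟩ | ⟨l₁, l₂, l₃⟩
  · exact ⟨x, a, b, hxa, hbx.symm, hab, hN, e₁.2 l₁, fun h => l₃ (e₃.1 h.symm),
      fun h => l₂ (e₂.1 h)⟩
  · exact ⟨a, b, x, hab, hxa.symm, hbx, hN.trans hrot, e₂.2 l₂, fun h => l₁ (e₁.1 h.symm),
      fun h => l₃ (e₃.1 h)⟩
  · exact ⟨b, x, a, hbx, hab.symm, hxa,
      hN.trans (hrot.trans (Set.insert_insert_singleton_rotate a b x)),
      e₃.2 l₃, fun h => l₂ (e₂.1 h.symm), fun h => l₁ (e₁.1 h)⟩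

end ThreeArcs

lemma cMajor_three_neighbours_of_adj {c : G.Walk x x} (hc : IsShortestOddHole G c)
    (hv : CMajor G c v) (hvx : G.Adj v x) (h3 : {w | w ∈ c.support ∧ G.Adj v w}.ncard ≤ 3) :
    ∃ x' y' z' : V, x' ≠ y' ∧ x' ≠ z' ∧ y' ≠ z' ∧
      {w | w ∈ c.support ∧ G.Adj v w} = {x', y', z'} ∧
      G.Adj x' y' ∧ ¬ G.Adj x' z' ∧ ¬ G.Adj y' z' := by
  obtain ⟨z, hz, hvz, hzx, hxz⟩ := hv.exists_adj_ne_and_not_toSubgraph_adj hc.isCycle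
    c.start_mem_support
  obtain ⟨y, hy, hvy, hyx, hyz⟩ := hv.exists_adj_ne_ne hc hvx hz hvz hzx.symm
    fun h => hxz (hc.isInducedWalk x z c.start_mem_support hz h)
  have hN : {w | w ∈ c.support ∧ G.Adj v w} = {x, y, z} := by
    refine (Set.eq_of_subset_of_ncard_le ?_ ?_
      (c.support.finite_toSet.subset fun w hw => hw.1)).symm
    · simp only [Set.insert_subset_iff, Set.singleton_subset_iff]
      exact ⟨⟨c.start_mem_support, hvx⟩, ⟨hy, hvy⟩, hz, hvz⟩
    · rwa [Set.ncard_eq_three.2 ⟨x, y, z, hyx.symm, hzx.symm, hyz, rfl⟩]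
  obtain ⟨a, b, A₁, A₂, A₃, ⟨rfl, rfl⟩ | ⟨rfl, rfl⟩, rfl⟩ := c.exists_eq_append_append hy hz
  · exact exists_adj_of_three_arcs hc hv hN hyx.symm hyz hzx
  · rw [Set.pair_comm] at hN
    exact exists_adj_of_three_arcs hc hv hN hzx.symm hyz.symm hyx

end

/-- a `C`-major vertex with at most three neighbours in `V(C)` (where `C` is
a shortest odd hole) has exactly three neighbours in `V(C)`, of which exactly one pair is
adjacent. -/
theorem cMajor_three_neighbours (G : SimpleGraph V) {u : V} (c : G.Walk u u)
    (hc : IsShortestOddHole G c) (v : V) (hv : CMajor G c v)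
    (h3 : ({w | w ∈ c.support ∧ G.Adj v w}).ncard ≤ 3) :
    ∃ x y z : V, x ≠ y ∧ x ≠ z ∧ y ≠ z ∧
      {w | w ∈ c.support ∧ G.Adj v w} = {x, y, z} ∧
      G.Adj x y ∧ ¬ G.Adj x z ∧ ¬ G.Adj y z := by
  classical
  obtain ⟨x, hx, hvx, -⟩ := hv.exists_adj_ne_and_not_toSubgraph_adj hc.isCycle c.start_mem_support
  have hrot : IsShortestOddHole G (c.rotate x hx) ∧ CMajor G (c.rotate x hx) v := by
    rw [← c.take_spec hx] at hc hv
    exact ⟨hc.append_comm, hv.append_comm⟩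
  simpa only [Walk.mem_support_rotate_iff] using cMajor_three_neighbours_of_adj hrot.1 hrot.2 hvx
    (by simpa only [Walk.mem_support_rotate_iff] using h3)

end SOH
end

section
/- Let C be a shortest odd hole of a simple graph G, and let v ∈ V(G) be a C-major vertex with exactly four neighbours in V(C). Then either exactly one pair of these four neighbours is adjacent, or C is jewelled. -/
open SimpleGraph

/-!
The four neighbours of `v` on `C` cut `C` into four arcs whose lengths add up to `|C|`, which
is odd. An arc of odd length `ℓ ≥ 3` would close up with `v` into an odd hole of length
`ℓ + 2 < |C|`, so every arc has length `1` or even length.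
Hence an odd number of arcs, one or three, are single edges of `C`. With one, the ends of that
edge form the only adjacent pair among the four neighbours (`C` is induced); with three, these
edges form a four-vertex path of `C` whose ends are both adjacent to `v`, so `C` is jewelled.
-/

namespace SimpleGraph.Walk

variable {V : Type*} {G : SimpleGraph V}

lemma IsCycle.getVert_eq_getVert_iff {u : V} {d : G.Walk u u} (hd : d.IsCycle) {k l : ℕ}
    (hk : k ≤ d.length) (hl : l ≤ d.length) :
    d.getVert k = d.getVert l ↔ k = l ∨ (k = 0 ∧ l = d.length) ∨ (k = d.length ∧ l = 0) := by
  refine ⟨fun h => ?_, ?_⟩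
  · rcases Nat.eq_zero_or_pos k with rfl | hk0
    · rw [getVert_zero, eq_comm, hd.getVert_endpoint_iff hl] at h
      omega
    rcases Nat.eq_zero_or_pos l with rfl | hl0
    · rw [getVert_zero, hd.getVert_endpoint_iff hk] at h
      omega
    exact Or.inl (hd.getVert_injOn ⟨hk0, hk⟩ ⟨hl0, hl⟩ h)
  · rintro (rfl | ⟨rfl, rfl⟩ | ⟨rfl, rfl⟩) <;> simp

lemma getVert_take_drop {u w : V} (d : G.Walk u w) {a ℓ m : ℕ} (hm : m ≤ ℓ) :
    ((d.drop a).take ℓ).getVert m = d.getVert (a + m) := by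
  simp [Nat.min_eq_right hm]

lemma length_take_drop {u w : V} (d : G.Walk u w) {a ℓ : ℕ} (h : a + ℓ ≤ d.length) :
    ((d.drop a).take ℓ).length = ℓ := by
  simp only [take_length, drop_length]
  omega

lemma IsCycle.isPath_take_drop {u : V} {d : G.Walk u u} (hd : d.IsCycle) {a ℓ : ℕ}
    (h : a + ℓ ≤ d.length) (hℓ : ℓ < d.length) : ((d.drop a).take ℓ).IsPath := by
  rw [← IsPath.getVert_injOn_iff, length_take_drop d h]
  intro m hm m' hm' heq
  simp only [Set.mem_ofPred_eq] at hm hm'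
  rw [getVert_take_drop d hm, getVert_take_drop d hm',
    hd.getVert_eq_getVert_iff (by omega) (by omega)] at heq
  omega

lemma mem_support_iff_exists_getVert_lt {u w : V} {d : G.Walk u u} (hd : ¬ d.Nil) :
    w ∈ d.support ↔ ∃ k < d.length, d.getVert k = w := by
  rw [mem_support_iff_exists_getVert]
  refine ⟨fun ⟨k, hk, hkn⟩ => ?_, fun ⟨k, hkn, hk⟩ => ⟨k, hk, hkn.le⟩⟩
  rcases hkn.lt_or_eq with hkn | rfl
  · exact ⟨k, hkn, hk⟩
  · exact ⟨0, not_nil_iff_lt_length.mp hd, by rw [← hk, getVert_length, getVert_zero]⟩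

lemma IsCycle.injective_getVert_comp {u : V} {d : G.Walk u u} (hd : d.IsCycle) {m : ℕ}
    {p : Fin m → ℕ} (hp : Function.Injective p) (hpn : ∀ i, p i < d.length) :
    Function.Injective (d.getVert ∘ p) := fun i j hij => hp <| by
  have := hd.getVert_eq_getVert_iff (hpn i).le (hpn j).le |>.mp hij
  have := hpn i
  have := hpn j
  omega

lemma IsCycle.exists_strictMono_adj_positions {x v : V} {d : G.Walk x x} (hd : d.IsCycle)
    (hvx : G.Adj v x) {m : ℕ} (hm : {w | w ∈ d.support ∧ G.Adj v w}.ncard = m + 1) :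
    ∃ p : Fin (m + 1) → ℕ, StrictMono p ∧ p 0 = 0 ∧ (∀ i, p i < d.length) ∧
      {w | w ∈ d.support ∧ G.Adj v w} = Set.range (d.getVert ∘ p) ∧
      ∀ k < d.length, G.Adj v (d.getVert k) → k ∈ Set.range p := by
  classical
  set I := (Finset.range d.length).filter (fun k => G.Adj v (d.getVert k))
  have hmem : ∀ k, k ∈ I ↔ k < d.length ∧ G.Adj v (d.getVert k) := by simp [I]
  have himage : {w | w ∈ d.support ∧ G.Adj v w} = d.getVert '' I := by
    ext w
    simp only [Set.mem_ofPred_eq, mem_support_iff_exists_getVert_lt hd.not_nil, Set.mem_image,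
      Finset.mem_coe, hmem]
    grind
  have hI : I.card = m + 1 := by
    rw [← hm, himage, Set.InjOn.ncard_image, Set.ncard_coe_finset]
    exact hd.getVert_injOn'.mono fun k hk => by
      simp only [Finset.mem_coe, hmem, Set.mem_ofPred_eq] at hk ⊢
      omega
  set p := I.orderEmbOfFin hI
  have hrange : Set.range p = I := Finset.range_orderEmbOfFin I hI
  have hpn : ∀ i, p i < d.length := fun i =>
    ((hmem _).mp (Finset.mem_coe.mp (hrange ▸ Set.mem_range_self i))).1
  have hp0 : p 0 = 0 := by
    obtain ⟨j, hj⟩ : 0 ∈ Set.range p := by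
      rw [hrange]
      exact (hmem 0).mpr ⟨by have := hd.three_le_length; omega, by simpa using hvx⟩
    have := p.monotone (Fin.zero_le j)
    omega
  exact ⟨p, p.strictMono, hp0, hpn, by rw [Set.range_comp, hrange, himage],
    fun k hk hvk => by rw [hrange]; exact (hmem k).mpr ⟨hk, hvk⟩⟩

end SimpleGraph.Walk

namespace SOH

variable {V : Type*} {G : SimpleGraph V}

open Walk

/-- The second alternative is the edge of `d` through its base point
`d.getVert 0 = d.getVert d.length`. -/
lemma IsHole.adj_getVert_iff {u : V} {d : G.Walk u u} (hd : IsHole G d) {k l : ℕ}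
    (hkl : k ≤ l) (hl : l ≤ d.length) :
    G.Adj (d.getVert k) (d.getVert l) ↔ l - k = 1 ∨ l - k + 1 = d.length := by
  obtain ⟨hcyc, -, hind⟩ := hd
  constructor
  · intro h
    obtain ⟨i, hi, hin⟩ := d.toSubgraph_adj_iff.mp
      (hind _ _ (d.getVert_mem_support k) (d.getVert_mem_support l) h)
    rw [Sym2.eq_iff] at hi
    rcases hi with ⟨h1, h2⟩ | ⟨h1, h2⟩ <;>
      rw [hcyc.getVert_eq_getVert_iff (by omega) (by omega)] at h1 h2 <;> omega
  · rintro (h | h)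
    · obtain rfl : l = k + 1 := by omega
      exact d.adj_getVert_succ (by omega)
    · obtain ⟨rfl, rfl⟩ | ⟨rfl, rfl⟩ : (k = 0 ∧ l = d.length - 1) ∨ (k = 1 ∧ l = d.length) := by
        omega
      · have := d.adj_getVert_succ (i := d.length - 1) (by omega)
        rw [Nat.sub_add_cancel (by omega), getVert_length] at this
        simpa using this.symm
      · simpa using (d.adj_getVert_succ (i := 0) (by omega)).symm

lemma IsHole.isInducedWalk_take_drop {u : V} {d : G.Walk u u} (hd : IsHole G d) {a ℓ : ℕ}
    (h : a + ℓ ≤ d.length) (hℓ : ℓ + 2 ≤ d.length) : IsInducedWalk G ((d.drop a).take ℓ) := by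
  intro y z hy hz hyz
  obtain ⟨m, rfl, hm⟩ := mem_support_iff_exists_getVert.mp hy
  obtain ⟨m', rfl, hm'⟩ := mem_support_iff_exists_getVert.mp hz
  rw [length_take_drop d h] at hm hm'
  clear hy hz
  wlog hmm : m ≤ m' generalizing m m'
  · exact (this m' hm' m hm hyz.symm (by omega)).symm
  rw [getVert_take_drop d hm, getVert_take_drop d hm',
    hd.adj_getVert_iff (by omega) (by omega)] at hyz
  obtain rfl : m' = m + 1 := by omega
  exact toSubgraph_adj_getVert _ (by rw [length_take_drop d h]; omega)

lemma IsHole.not_mem_support_of_two_lt_ncard {u v : V} {d : G.Walk u u} (hd : IsHole G d)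
    (h : 2 < {w | w ∈ d.support ∧ G.Adj v w}.ncard) : v ∉ d.support := by
  intro hv
  have hsub : {w | w ∈ d.support ∧ G.Adj v w} ⊆ d.toSubgraph.neighborSet v :=
    fun w ⟨hw, hvw⟩ => hd.2.2 v w hv hw hvw
  have htwo := hd.1.ncard_neighborSet_toSubgraph_eq_two hv
  have := Set.ncard_le_ncard hsub (Set.finite_of_ncard_pos (by omega))
  omega

lemma isCycle_cons_concat {a b v : V} {P : G.Walk a b} (hP : P.IsPath) (hab : a ≠ b)
    (hvP : v ∉ P.support) (hva : G.Adj v a) (hbv : G.Adj b v) :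
    (cons hva (P.concat hbv)).IsCycle := by
  rw [cons_isCycle_iff, edges_concat, List.concat_eq_append]
  refine ⟨hP.concat hvP hbv, fun h => ?_⟩
  rcases List.mem_append.mp h with h | h
  · exact hvP (P.fst_mem_support_of_mem_edges h)
  · simp only [List.mem_singleton, Sym2.eq_iff, true_and] at h
    rcases h with ⟨rfl, -⟩ | rfl
    · exact hvP P.end_mem_support
    · exact hab rfl

lemma isHole_cons_concat_s3 {a b v : V} {P : G.Walk a b} (hP : P.IsPath)
    (hind : IsInducedWalk G P) (hlen : 2 ≤ P.length) (hvP : v ∉ P.support)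
    (hva : G.Adj v a) (hbv : G.Adj b v) (hN : ∀ y ∈ P.support, G.Adj v y → y = a ∨ y = b) :
    IsHole G (cons hva (P.concat hbv)) := by
  have hab : a ≠ b := by
    rintro rfl
    rw [length_eq_zero_iff.mpr (isPath_iff_nil.mp hP)] at hlen
    omega
  refine ⟨isCycle_cons_concat hP hab hvP hva hbv,
    by simp only [length_cons, length_concat]; omega, fun x y hx hy hxy => ?_⟩
  rw [adj_toSubgraph_iff_mem_edges]
  simp only [support_cons, support_concat, List.mem_cons, List.mem_append, List.not_mem_nil,
    or_false] at hx hy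
  simp only [edges_cons, edges_concat, List.concat_eq_append, List.mem_cons, List.mem_append,
    List.not_mem_nil, or_false]
  have := hind x y
  have := hN x
  have := hN y
  have := hxy.ne
  have := hxy.symm
  grind [adj_toSubgraph_iff_mem_edges]

lemma IsShortestOddHole.eq_one_or_even_of_arc {u v : V} {d : G.Walk u u}
    (hd : IsShortestOddHole G d) (hv : v ∉ d.support) {a ℓ : ℕ} (h : a + ℓ ≤ d.length)
    (hℓ : ℓ + 3 ≤ d.length) (ha : G.Adj v (d.getVert a)) (hb : G.Adj v (d.getVert (a + ℓ)))
    (hint : ∀ k, a < k → k < a + ℓ → ¬ G.Adj v (d.getVert k)) : ℓ = 1 ∨ Even ℓ := by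
  refine (Nat.even_or_odd ℓ).symm.imp (fun hodd => ?_) id
  by_contra hne
  have h3 : 3 ≤ ℓ := by obtain ⟨j, rfl⟩ := hodd; omega
  have hPlen := length_take_drop d h
  have hsupp : ∀ y ∈ ((d.drop a).take ℓ).support, ∃ m ≤ ℓ, y = d.getVert (a + m) := by
    intro y hy
    obtain ⟨m, rfl, hm⟩ := mem_support_iff_exists_getVert.mp hy
    exact ⟨m, hPlen ▸ hm, getVert_take_drop d (hPlen ▸ hm)⟩
  have hbv : G.Adj ((d.drop a).getVert ℓ) v := by rw [drop_getVert]; exact hb.symm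
  have hN : ∀ y ∈ ((d.drop a).take ℓ).support, G.Adj v y →
      y = d.getVert a ∨ y = (d.drop a).getVert ℓ := by
    intro y hy hvy
    obtain ⟨m, hm, rfl⟩ := hsupp y hy
    rw [drop_getVert]
    by_contra hend
    exact hint (a + m) (by grind) (by grind) hvy
  have hhole := isHole_cons_concat_s3 (hd.1.1.1.isPath_take_drop h (by omega))
    (hd.1.1.isInducedWalk_take_drop h (by omega)) (by omega)
    (fun hvP => by obtain ⟨m, -, rfl⟩ := hsupp v hvP; exact hv (d.getVert_mem_support _))
    ha hbv hN
  have := hd.2 _ _ ⟨hhole, by simpa [length_concat, hPlen, add_assoc] using hodd.add_even even_two⟩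
  simp only [length_cons, length_concat, hPlen] at this
  omega

/-- `S` has exactly four elements, and exactly one pair of them is adjacent. -/
def HasUniqueAdjacentPair (G : SimpleGraph V) (S : Set V) : Prop :=
  ∃ x1 x2 x3 x4 : V, ([x1, x2, x3, x4] : List V).Nodup ∧ S = {x1, x2, x3, x4} ∧
    G.Adj x1 x2 ∧ ¬ G.Adj x1 x3 ∧ ¬ G.Adj x1 x4 ∧ ¬ G.Adj x2 x3 ∧
    ¬ G.Adj x2 x4 ∧ ¬ G.Adj x3 x4

lemma exists_eq_one_iff_of_odd_sum (ℓ : Fin 4 → ℕ) (hℓ : ∀ i, ℓ i = 1 ∨ Even (ℓ i))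
    (hodd : Odd (∑ i, ℓ i)) : ∃ i, (∀ j, ℓ j = 1 ↔ j = i) ∨ (∀ j, ℓ j = 1 ↔ j ≠ i) := by
  classical
  set O := Finset.univ.filter (ℓ · = 1)
  have hmem : ∀ j, j ∈ O ↔ ℓ j = 1 := by simp [O]
  have hOodd : Odd O.card := by
    rw [← Finset.sum_filter_add_sum_filter_not Finset.univ (ℓ · = 1)] at hodd
    have hrest : Even (∑ j ∈ Finset.univ.filter (¬ ℓ · = 1), ℓ j) :=
      Finset.even_sum _ fun j hj => (hℓ j).resolve_left (by simpa using hj)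
    rw [Finset.sum_congr rfl fun j hj => (hmem j).mp hj, Finset.sum_const, smul_eq_mul,
      mul_one] at hodd
    exact (Nat.odd_add.mp hodd).mpr hrest
  have hle : O.card ≤ 4 := (Finset.card_le_univ O).trans_eq (Fintype.card_fin 4)
  obtain h1 | h3 : O.card = 1 ∨ Oᶜ.card = 1 := by
    rw [Finset.card_compl, Fintype.card_fin]
    obtain ⟨k, hk⟩ := hOodd
    omega
  · obtain ⟨i, hi⟩ := Finset.card_eq_one.mp h1
    exact ⟨i, Or.inl fun j => by rw [← hmem, hi, Finset.mem_singleton]⟩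
  · obtain ⟨i, hi⟩ := Finset.card_eq_one.mp h3
    exact ⟨i, Or.inr fun j => by
      rw [← hmem, ne_eq, ← Finset.mem_singleton, ← hi, Finset.mem_compl, not_not]⟩

lemma nodup_fin_four_shift {x : Fin 4 → V} (hx : Function.Injective x) (i : Fin 4) :
    ([x i, x (i + 1), x (i + 2), x (i + 3)] : List V).Nodup :=
  List.Nodup.map (l := [i, i + 1, i + 2, i + 3]) hx (by fin_cases i <;> decide)

lemma hasUniqueAdjacentPair_range {x : Fin 4 → V} (hx : Function.Injective x) {i : Fin 4}
    (hadj : ∀ j, G.Adj (x j) (x (j + 1)) ↔ j = i) (hfar : ∀ j, ¬ G.Adj (x j) (x (j + 2))) :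
    HasUniqueAdjacentPair G (Set.range x) := by
  have h1 := hadj (i + 1)
  have h2 := hadj (i + 2)
  have h3 := hadj (i + 3)
  have h13 := hfar (i + 1)
  rw [show i + 1 + 1 = i + 2 by omega] at h1
  rw [show i + 2 + 1 = i + 3 by omega] at h2
  rw [show i + 3 + 1 = i by omega] at h3
  rw [show i + 1 + 2 = i + 3 by omega] at h13
  refine ⟨x i, x (i + 1), x (i + 2), x (i + 3), nodup_fin_four_shift hx i, ?_,
    (hadj i).mpr rfl, hfar i, fun h => absurd (h3.mp h.symm) (by omega),
    fun h => absurd (h1.mp h) (by omega), h13, fun h => absurd (h2.mp h) (by omega)⟩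
  ext w
  simp only [Set.mem_range, Set.mem_insert_iff, Set.mem_singleton_iff]
  constructor
  · rintro ⟨j, rfl⟩
    obtain rfl | rfl | rfl | rfl : j = i ∨ j = i + 1 ∨ j = i + 2 ∨ j = i + 3 := by omega
    all_goals simp
  · rintro (rfl | rfl | rfl | rfl) <;> exact ⟨_, rfl⟩

lemma jewelled_of_three_consecutive_adj {u v : V} {c : G.Walk u u} (hind : IsInducedWalk G c)
    {x : Fin 4 → V} (hx : Function.Injective x) (hxc : ∀ j, x j ∈ c.support)
    (hv : ∀ j, G.Adj v (x j)) {i : Fin 4} (hadj : ∀ j ≠ i, G.Adj (x j) (x (j + 1))) :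
    Jewelled G c := by
  have hnd := nodup_fin_four_shift hx (i + 1)
  have h1 := hadj (i + 1) (by omega)
  have h2 := hadj (i + 2) (by omega)
  have h3 := hadj (i + 3) (by omega)
  rw [show i + 1 + 1 = i + 2 by omega] at hnd h1
  rw [show i + 1 + 2 = i + 3 by omega] at hnd
  rw [show i + 2 + 1 = i + 3 by omega] at h2
  rw [show i + 1 + 3 = i by omega] at hnd
  rw [show i + 3 + 1 = i by omega] at h3
  exact Or.inl ⟨_, _, _, _, v, hnd, hind _ _ (hxc _) (hxc _) h1, hind _ _ (hxc _) (hxc _) h2,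
    hind _ _ (hxc _) (hxc _) h3, hv _, hv _⟩

/-- Here `x` lists the neighbours of `v` on `c` in cyclic order and `ℓ i` is the length of the
arc of `c` from `x i` to `x (i + 1)`. -/
lemma hasUniqueAdjacentPair_or_jewelled_of_arcs {u v : V} {c : G.Walk u u}
    (hind : IsInducedWalk G c) {x : Fin 4 → V} (hx : Function.Injective x)
    (hN : {w | w ∈ c.support ∧ G.Adj v w} = Set.range x) {ℓ : Fin 4 → ℕ}
    (hℓ : ∀ i, ℓ i = 1 ∨ Even (ℓ i)) (hodd : Odd (∑ i, ℓ i))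
    (hadj : ∀ i, G.Adj (x i) (x (i + 1)) ↔ ℓ i = 1) (hfar : ∀ i, ¬ G.Adj (x i) (x (i + 2))) :
    HasUniqueAdjacentPair G {w | w ∈ c.support ∧ G.Adj v w} ∨ Jewelled G c := by
  have hxN : ∀ j, x j ∈ c.support ∧ G.Adj v (x j) := fun j => by
    rw [← Set.mem_ofPred (p := fun w => w ∈ c.support ∧ G.Adj v w), hN]
    exact ⟨j, rfl⟩
  obtain ⟨i, hone | hthree⟩ := exists_eq_one_iff_of_odd_sum ℓ hℓ hodd
  · exact Or.inl (hN ▸ hasUniqueAdjacentPair_range hx (fun j => (hadj j).trans (hone j)) hfar)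
  · exact Or.inr (jewelled_of_three_consecutive_adj hind hx (fun j => (hxN j).1)
      (fun j => (hxN j).2) fun j hj => (hadj j).mpr ((hthree j).mpr hj))

theorem IsShortestOddHole.hasUniqueAdjacentPair_or_jewelled {x v : V} {d : G.Walk x x}
    (hd : IsShortestOddHole G d) (hvx : G.Adj v x)
    (h4 : {w | w ∈ d.support ∧ G.Adj v w}.ncard = 4) :
    HasUniqueAdjacentPair G {w | w ∈ d.support ∧ G.Adj v w} ∨ Jewelled G d := by
  have hhole := hd.1.1
  have hv := hhole.not_mem_support_of_two_lt_ncard (v := v) (by omega)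
  obtain ⟨p, hp, hp0, hpn, hN, hpos⟩ := hhole.1.exists_strictMono_adj_positions hvx h4
  have h01 : p 0 < p 1 := hp (by decide)
  have h12 : p 1 < p 2 := hp (by decide)
  have h23 : p 2 < p 3 := hp (by decide)
  have h3n := hpn 3
  set n := d.length
  set ℓ : Fin 4 → ℕ := ![p 1 - p 0, p 2 - p 1, p 3 - p 2, n - p 3]
  have hlt : ∀ i, 0 < ℓ i ∧ p i + ℓ i ≤ n ∧ ℓ i + 3 ≤ n := by
    intro i
    fin_cases i <;> simp only [ℓ, Fin.isValue, Fin.zero_eta, Fin.mk_one, Fin.reduceFinMk,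
      Matrix.cons_val_zero, Matrix.cons_val_one, Matrix.cons_val] <;> omega
  have hnext : ∀ i, d.getVert (p i + ℓ i) = d.getVert (p (i + 1)) := by
    intro i
    fin_cases i <;> simp [ℓ, hp0, Nat.add_sub_cancel' h12.le, Nat.add_sub_cancel' h23.le,
      Nat.add_sub_cancel' h3n.le, n]
  have hvy : ∀ i, G.Adj v (d.getVert (p i)) := fun i => (hN.ge ⟨i, rfl⟩).2
  have hℓ : ∀ i, ℓ i = 1 ∨ Even (ℓ i) := by
    intro i
    refine hd.eq_one_or_even_of_arc hv (hlt i).2.1 (hlt i).2.2 (hvy i) (hnext i ▸ hvy (i + 1))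
      fun k hk hk' hvk => ?_
    obtain ⟨j, rfl⟩ := hpos k (by have := hlt i; omega) hvk
    fin_cases i <;> fin_cases j <;>
      simp only [ℓ, Fin.isValue, Fin.zero_eta, Fin.mk_one, Fin.reduceFinMk,
        Matrix.cons_val_zero, Matrix.cons_val_one, Matrix.cons_val] at hk hk' <;> omega
  have hsum : ∑ i, ℓ i = n := by
    simp only [Fin.sum_univ_four, ℓ, Fin.isValue, Matrix.cons_val_zero, Matrix.cons_val_one,
      Matrix.cons_val]
    omega
  have hadj : ∀ i, G.Adj (d.getVert (p i)) (d.getVert (p (i + 1))) ↔ ℓ i = 1 := by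
    intro i
    rw [← hnext, hhole.adj_getVert_iff (by omega) (hlt i).2.1]
    have := hlt i
    omega
  have hfar : ∀ i, ¬ G.Adj (d.getVert (p i)) (d.getVert (p (i + 2))) := by
    intro i
    fin_cases i <;>
      simp only [Fin.isValue, Fin.zero_eta, Fin.mk_one, Fin.reduceFinMk, Fin.reduceAdd]
    all_goals first
      | (rw [hhole.adj_getVert_iff (by omega) (by omega)]; omega)
      | (rw [G.adj_comm, hhole.adj_getVert_iff (by omega) (by omega)]; omega)
  exact hasUniqueAdjacentPair_or_jewelled_of_arcs hhole.2.2
    (hhole.1.injective_getVert_comp hp.injective hpn) hN hℓ (hsum ▸ hd.1.2) hadj hfar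

lemma isInducedWalk_rotate [DecidableEq V] {u x : V} {c : G.Walk u u} (h : x ∈ c.support) :
    IsInducedWalk G (c.rotate x h) ↔ IsInducedWalk G c := by
  simp only [IsInducedWalk, toSubgraph_rotate, mem_support_rotate_iff]

lemma IsShortestOddHole.rotate [DecidableEq V] {u x : V} {c : G.Walk u u}
    (hc : IsShortestOddHole G c) (h : x ∈ c.support) : IsShortestOddHole G (c.rotate x h) := by
  obtain ⟨⟨⟨hcyc, hlen, hind⟩, hodd⟩, hmin⟩ := hc
  rw [← length_rotate c x h] at hlen hodd hmin
  exact ⟨⟨⟨hcyc.rotate h, hlen, (isInducedWalk_rotate h).mpr hind⟩, hodd⟩, hmin⟩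

lemma jewelled_rotate_iff [DecidableEq V] {u x : V} {c : G.Walk u u} (h : x ∈ c.support) :
    Jewelled G (c.rotate x h) ↔ Jewelled G c := by
  simp only [Jewelled, toSubgraph_rotate, mem_support_rotate_iff]

theorem cMajor_four_neighbours_general (G : SimpleGraph V) {u : V} (c : G.Walk u u)
    (hc : IsShortestOddHole G c) (v : V)
    (h4 : ({w | w ∈ c.support ∧ G.Adj v w}).ncard = 4) :
    (∃ x1 x2 x3 x4 : V, ([x1, x2, x3, x4] : List V).Nodup ∧
      {w | w ∈ c.support ∧ G.Adj v w} = {x1, x2, x3, x4} ∧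
      G.Adj x1 x2 ∧ ¬ G.Adj x1 x3 ∧ ¬ G.Adj x1 x4 ∧ ¬ G.Adj x2 x3 ∧
      ¬ G.Adj x2 x4 ∧ ¬ G.Adj x3 x4) ∨
    Jewelled G c := by
  classical
  obtain ⟨x, hxc, hvx⟩ : {w | w ∈ c.support ∧ G.Adj v w}.Nonempty :=
    Set.nonempty_of_ncard_ne_zero (by omega)
  have hN : {w | w ∈ (c.rotate x hxc).support ∧ G.Adj v w} =
      {w | w ∈ c.support ∧ G.Adj v w} := by
    simp only [mem_support_rotate_iff]
  have := (hc.rotate hxc).hasUniqueAdjacentPair_or_jewelled hvx (hN ▸ h4)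
  rwa [hN, jewelled_rotate_iff] at this

/-- a `C`-major vertex with exactly four neighbours in `V(C)` (where `C` is
a shortest odd hole) has exactly one adjacent pair among these four neighbours, unless
`C` is jewelled. -/
theorem cMajor_four_neighbours (G : SimpleGraph V) {u : V} (c : G.Walk u u)
    (hc : IsShortestOddHole G c) (v : V) (hv : CMajor G c v)
    (h4 : ({w | w ∈ c.support ∧ G.Adj v w}).ncard = 4) :
    (∃ x1 x2 x3 x4 : V, ([x1, x2, x3, x4] : List V).Nodup ∧
      {w | w ∈ c.support ∧ G.Adj v w} = {x1, x2, x3, x4} ∧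
      G.Adj x1 x2 ∧ ¬ G.Adj x1 x3 ∧ ¬ G.Adj x1 x4 ∧ ¬ G.Adj x2 x3 ∧
      ¬ G.Adj x2 x4 ∧ ¬ G.Adj x3 x4) ∨
    Jewelled G c :=
  cMajor_four_neighbours_general G c hc v h4

end SOH
end

section
/- Let G be a simple graph in which no shortest odd hole is jewelled, let H be a great pyramid in G with apex a, base {b1,b2,b3} and constituent paths P1,P2,P3, and let v be a vertex major for H having at most one neighbour in {b1,b2,b3}. Then there exists k ∈ {1,2,3} such that v has no neighbour in V(Pk)\{a}. -/
open SimpleGraph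

namespace SOH

variable {V : Type*}

/-!
For a hole `D` avoiding `v`, count the edges of `D` with both ends adjacent to `v`. Cut `D` at
the neighbours of `v` into gaps: a gap of length one contributes one such edge, a longer gap
none. Let no odd hole be shorter than `D`. If a gap has odd length at least three, its
complementary arc has length at most two: either the ends of the gap are adjacent and the arc is
that edge, or closing the gap up through `v` gives an odd hole, which is no shorter than `D`. All
neighbours of `v` on `D` then lie on that arc, which is impossible if `v` has four neighbours on
`D`, or if `D` is even and `v` has two nonadjacent neighbours on it. In these cases long gaps are
even, so the count has the parity of the length of `D`.

If `v` had a neighbour in each `Pk \ {a}`, it would lie off `P3` and off the three holes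
`P1 ∪ P2`, `P1 ∪ P3`, `P2 ∪ P3` of the pyramid. The first is a shortest odd hole on which `v` has
four neighbours; the other two are shorter, hence even, and `v` has two nonadjacent neighbours on
each. Since `v` sees at most one base vertex, the base edges are never counted, so the counts of
the three holes add up to twice the sum of the counts of the three paths, which contradicts their
parities.
-/

open Walk

variable {G : SimpleGraph V} {u v x y : V}

theorem _root_.SimpleGraph.Walk.IsCycle.eq_or_eq_of_mem_support_append_s11 {q : G.Walk x y}
    {r : G.Walk y x} (hc : (q.append r).IsCycle) {w : V} (hq : w ∈ q.support)
    (hr : w ∈ r.support) : w = x ∨ w = y := by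
  by_contra! hw
  have hq' : w ∈ q.support.tail := by
    rw [← q.cons_tail_support] at hq
    exact (List.mem_cons.mp hq).resolve_left hw.1
  have hr' : w ∈ r.support.tail := by
    rw [← r.cons_tail_support] at hr
    exact (List.mem_cons.mp hr).resolve_left hw.2
  have := hc.support_nodup
  rw [tail_support_append, List.nodup_append] at this
  exact this.2.2 w hq' w hr' rfl

theorem _root_.SimpleGraph.Walk.isCycle_append_comm {p : G.Walk x y} {q : G.Walk y x} :
    (p.append q).IsCycle ↔ (q.append p).IsCycle := by
  suffices h : ∀ {x y : V} (p : G.Walk x y) (q : G.Walk y x),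
      (p.append q).IsCycle → (q.append p).IsCycle from ⟨h p q, h q p⟩
  intro x y p q hc
  rw [isCycle_def, isTrail_def, edges_append, tail_support_append] at hc ⊢
  refine ⟨List.perm_append_comm.nodup_iff.mp hc.1, fun h => hc.2.1 ?_,
    List.perm_append_comm.nodup_iff.mp hc.2.2⟩
  rw [eq_nil_iff_nil, ← length_eq_zero_iff, length_append] at h ⊢
  omega

lemma isInducedWalk_congr {x' y' : V} {p : G.Walk x y} {q : G.Walk x' y'}
    (hs : ∀ w, w ∈ p.support ↔ w ∈ q.support) (he : ∀ e, e ∈ p.edges ↔ e ∈ q.edges) :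
    IsInducedWalk G p ↔ IsInducedWalk G q := by
  simp only [IsInducedWalk, adj_toSubgraph_iff_mem_edges, hs, he]

lemma isHole_append_comm {p : G.Walk x y} {q : G.Walk y x} :
    IsHole G (p.append q) ↔ IsHole G (q.append p) := by
  simp only [IsHole, isCycle_append_comm (p := p), length_append, Nat.add_comm p.length]
  rw [isInducedWalk_congr (q := q.append p) (by simp [or_comm]) (by simp [or_comm])]

lemma IsHole.isInducedWalk_left_of_not_adj {q : G.Walk x y} {r : G.Walk y x}
    (hc : IsHole G (q.append r)) (hxy : ¬ G.Adj x y) : IsInducedWalk G q := by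
  intro a b ha hb hab
  have hc' := hc.2.2 a b (by simp [ha]) (by simp [hb]) hab
  rw [adj_toSubgraph_iff_mem_edges, edges_append, List.mem_append] at hc'
  rw [adj_toSubgraph_iff_mem_edges]
  refine hc'.resolve_right fun hr => ?_
  have ha' := hc.1.eq_or_eq_of_mem_support_append_s11 ha (r.fst_mem_support_of_mem_edges hr)
  have hb' := hc.1.eq_or_eq_of_mem_support_append_s11 hb (r.snd_mem_support_of_mem_edges hr)
  rcases ha' with rfl | rfl <;> rcases hb' with rfl | rfl
  exacts [hab.ne rfl, hxy hab, hxy hab.symm, hab.ne rfl]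

lemma isHole_cons_concat_s11 {q : G.Walk x y} (hq : q.IsPath) (hqi : IsInducedWalk G q)
    (hlen : 2 ≤ q.length) (hv : v ∉ q.support) (hvx : G.Adj v x) (hvy : G.Adj v y)
    (hends : ∀ w ∈ q.support, G.Adj v w → w = x ∨ w = y) :
    IsHole G (cons hvx (q.concat hvy.symm)) := by
  refine ⟨(cons_isCycle_iff _ _).mpr ⟨hq.concat hv _, fun h => ?_⟩, ?_, ?_⟩
  · rw [edges_concat, List.concat_eq_append, List.mem_append, List.mem_singleton] at h
    rcases h with h | h
    · exact hv (q.fst_mem_support_of_mem_edges h)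
    · rcases Sym2.eq_iff.mp h with ⟨rfl, -⟩ | ⟨-, rfl⟩
      · exact hv q.end_mem_support
      · have := length_eq_zero_iff.mpr (isPath_iff_nil.mp hq)
        omega
  · rw [length_cons, length_concat]
    omega
  · have hmem : ∀ w ∈ (cons hvx (q.concat hvy.symm)).support, w = v ∨ w ∈ q.support := by
      intro w hw
      simp only [support_cons, support_concat, List.mem_cons, List.mem_append, List.mem_nil_iff,
        or_false] at hw
      tauto
    have hedge : ∀ w ∈ q.support, G.Adj v w →
        s(v, w) ∈ (cons hvx (q.concat hvy.symm)).edges := by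
      intro w hw hvw
      rcases hends w hw hvw with rfl | rfl <;> simp [Sym2.eq_swap]
    intro a b ha hb hab
    rw [adj_toSubgraph_iff_mem_edges]
    rcases hmem a ha with ha' | ha' <;> rcases hmem b hb with hb' | hb'
    · exact absurd (ha'.trans hb'.symm) hab.ne
    · rw [ha'] at hab ⊢
      exact hedge b hb' hab
    · rw [hb'] at hab ⊢
      rw [Sym2.eq_swap]
      exact hedge a ha' hab.symm
    · simp [adj_toSubgraph_iff_mem_edges.mp (hqi a b ha' hb' hab)]

open scoped Classical in
noncomputable def nbrEdgeCount (G : SimpleGraph V) (v : V) {x y : V} (p : G.Walk x y) : ℕ :=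
  p.edges.countP fun e => ∀ w ∈ e, G.Adj v w

lemma nbrEdgeCount_append (p : G.Walk x y) (q : G.Walk y u) :
    nbrEdgeCount G v (p.append q) = nbrEdgeCount G v p + nbrEdgeCount G v q := by
  simp [nbrEdgeCount, List.countP_append]

lemma nbrEdgeCount_reverse (p : G.Walk x y) : nbrEdgeCount G v p.reverse = nbrEdgeCount G v p := by
  simp [nbrEdgeCount, List.countP_reverse]

lemma nbrEdgeCount_cons_of_not_adj (h : G.Adj x y) (p : G.Walk y u)
    (hxy : ¬ (G.Adj v x ∧ G.Adj v y)) : nbrEdgeCount G v (cons h p) = nbrEdgeCount G v p := by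
  simp [nbrEdgeCount, hxy]

lemma nbrEdgeCount_eq_one_of_length_eq_one {q : G.Walk x y} (h1 : q.length = 1)
    (hvx : G.Adj v x) (hvy : G.Adj v y) : nbrEdgeCount G v q = 1 := by
  cases q with
  | nil => simp at h1
  | cons h q' =>
    cases q' with
    | nil => simp [nbrEdgeCount, hvx, hvy]
    | cons => simp at h1

lemma nbrEdgeCount_eq_zero_of_gap {q : G.Walk x y} (hq : q.IsPath)
    (hgap : ∀ w ∈ q.support, G.Adj v w → w = x ∨ w = y) (h1 : q.length ≠ 1) :
    nbrEdgeCount G v q = 0 := by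
  refine List.countP_eq_zero.mpr fun e he hv => h1 ?_
  induction e using Sym2.ind with | h a b => ?_
  have hv : G.Adj v a ∧ G.Adj v b := by simpa using hv
  have ha := hgap a (q.fst_mem_support_of_mem_edges he) hv.1
  have hb := hgap b (q.snd_mem_support_of_mem_edges he) hv.2
  have hab := (q.adj_of_mem_edges he).ne
  rcases ha with rfl | rfl <;> rcases hb with rfl | rfl
  · exact absurd rfl hab
  · exact hq.length_eq_one_of_mem_edges he
  · exact hq.length_eq_one_of_mem_edges (Sym2.eq_swap ▸ he)
  · exact absurd rfl hab

lemma length_le_two_of_odd_gap {q : G.Walk x y} {r : G.Walk y x} (hc : IsHole G (q.append r))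
    (hmin : ∀ (w : V) (d : G.Walk w w), IsOddHole G d → (q.append r).length ≤ d.length)
    (hxy : x ≠ y) (hv : v ∉ q.support) (hvx : G.Adj v x) (hvy : G.Adj v y)
    (hgap : ∀ w ∈ q.support, G.Adj v w → w = x ∨ w = y) (hodd : Odd q.length)
    (h1 : q.length ≠ 1) : r.length ≤ 2 := by
  have hq : q.IsPath := hc.1.isPath_of_append_left (not_nil_of_ne hxy.symm)
  by_cases hadj : G.Adj x y
  · have hedge := hc.2.2 x y (by simp) (by simp) hadj
    rw [adj_toSubgraph_iff_mem_edges, edges_append, List.mem_append] at hedge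
    rcases hedge with h | h
    · exact absurd (hq.length_eq_one_of_mem_edges h) h1
    · have hr : r.IsPath := hc.1.isPath_of_append_right (not_nil_of_ne hxy)
      exact (hr.length_eq_one_of_mem_edges (Sym2.eq_swap ▸ h)).le.trans (by norm_num)
  · obtain ⟨k, hk⟩ := hodd
    have hK := isHole_cons_concat_s11 hq (hc.isInducedWalk_left_of_not_adj hadj) (by omega) hv hvx hvy
      hgap
    have := hmin _ _ ⟨hK, ⟨k + 1, by rw [length_cons, length_concat, hk]; omega⟩⟩
    rw [length_append, length_cons, length_concat] at this
    omega

/-- `q` and `r` are complementary arcs of a hole with the vertices and length of `c`, such as a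
rotation of `c`: the parity argument only sees these two invariants of `c`. -/
def IsArcPair (c : G.Walk u u) (q : G.Walk x y) (r : G.Walk y x) : Prop :=
  IsHole G (q.append r) ∧ (q.append r).length = c.length ∧
    ∀ w, w ∈ (q.append r).support ↔ w ∈ c.support

lemma IsArcPair.symm {c : G.Walk u u} {q : G.Walk x y} {r : G.Walk y x} (h : IsArcPair c q r) :
    IsArcPair c r q := by
  refine ⟨isHole_append_comm.mp h.1, by rw [← h.2.1, length_append, length_append, Nat.add_comm],
    fun w => ?_⟩
  rw [← h.2.2]
  simp [or_comm]

lemma isArcPair_append_left_iff {c : G.Walk u u} {w : V} {q₁ : G.Walk x w} {q₂ : G.Walk w y}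
    {r : G.Walk y x} : IsArcPair c (q₁.append q₂) r ↔ IsArcPair c q₁ (q₂.append r) := by
  simp only [IsArcPair, append_assoc]

/-- An odd gap of length at least three between neighbours of `v` on a shortest odd hole `c` would
violate this: its complementary arc is such a walk `p`. -/
def IsSpreadOver (G : SimpleGraph V) (v : V) (c : G.Walk u u) : Prop :=
  ∀ ⦃a b : V⦄ (p : G.Walk a b), p.length ≤ 2 → Odd (c.length + p.length) →
    ∃ w ∈ c.support, G.Adj v w ∧ w ∉ p.support

lemma nbrEdgeCount_mod_two_of_gap {c : G.Walk u u}
    (hmin : ∀ (w : V) (d : G.Walk w w), IsOddHole G d → c.length ≤ d.length)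
    (hv : v ∉ c.support) (hspread : IsSpreadOver G v c) {q : G.Walk x y} {r : G.Walk y x}
    (hqr : IsArcPair c q r) (hxy : x ≠ y) (hvx : G.Adj v x) (hvy : G.Adj v y)
    (hgap : ∀ w ∈ q.support, G.Adj v w → w = x ∨ w = y) :
    nbrEdgeCount G v q % 2 = q.length % 2 := by
  obtain ⟨hc, hlen, hsupp⟩ := hqr
  have hq : q.IsPath := hc.1.isPath_of_append_left (not_nil_of_ne hxy.symm)
  by_cases h1 : q.length = 1
  · rw [nbrEdgeCount_eq_one_of_length_eq_one h1 hvx hvy, h1]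
  rw [nbrEdgeCount_eq_zero_of_gap hq hgap h1]
  by_contra hodd
  replace hodd : Odd q.length := Nat.odd_iff.mpr (by omega)
  have hr := length_le_two_of_odd_gap hc (hlen ▸ hmin) hxy
    (fun h => hv ((hsupp v).mp (by simp [h]))) hvx hvy hgap hodd h1
  obtain ⟨w, hw, hvw, hwr⟩ := hspread r hr (by
    rw [← hlen, length_append]
    obtain ⟨k, hk⟩ := hodd
    exact ⟨k + r.length, by omega⟩)
  rcases (mem_support_append_iff q r).mp ((hsupp w).mpr hw) with hwq | hwr'
  · rcases hgap w hwq hvw with rfl | rfl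
    exacts [hwr r.end_mem_support, hwr r.start_mem_support]
  · exact hwr hwr'

lemma nbrEdgeCount_mod_two_of_isArcPair {c : G.Walk u u}
    (hmin : ∀ (w : V) (d : G.Walk w w), IsOddHole G d → c.length ≤ d.length)
    (hv : v ∉ c.support) (hspread : IsSpreadOver G v c) {q : G.Walk x y} {r : G.Walk y x}
    (hqr : IsArcPair c q r) (hxy : x ≠ y) (hvx : G.Adj v x) (hvy : G.Adj v y) :
    nbrEdgeCount G v q % 2 = q.length % 2 := by
  induction hn : q.length using Nat.strongRec generalizing x y q r with | ind n ih =>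
    by_cases! hsplit : ∃ w ∈ q.support, G.Adj v w ∧ w ≠ x ∧ w ≠ y
    · obtain ⟨w, hw, hvw, hwx, hwy⟩ := hsplit
      obtain ⟨q₁, q₂, rfl⟩ := mem_support_iff_exists_append.mp hw
      have hlen₁ := not_nil_iff_lt_length.mp (not_nil_of_ne hwx.symm : ¬ q₁.Nil)
      have hlen₂ := not_nil_iff_lt_length.mp (not_nil_of_ne hwy : ¬ q₂.Nil)
      rw [length_append] at hn
      have h₁ := ih _ (by omega) (isArcPair_append_left_iff.mp hqr) hwx.symm hvx hvw rfl
      have h₂ := ih _ (by omega) (isArcPair_append_left_iff.mpr hqr.symm).symm hwy hvw hvy rfl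
      rw [nbrEdgeCount_append]
      omega
    · exact hn ▸ nbrEdgeCount_mod_two_of_gap hmin hv hspread hqr hxy hvx hvy
        fun w hw hvw => or_iff_not_imp_left.mpr (hsplit w hw hvw)

theorem IsHole.nbrEdgeCount_mod_two {c : G.Walk u u} (hc : IsHole G c)
    (hmin : ∀ (w : V) (d : G.Walk w w), IsOddHole G d → c.length ≤ d.length)
    (hv : v ∉ c.support) (hspread : IsSpreadOver G v c)
    {x₁ x₂ : V} (hx₁ : x₁ ∈ c.support) (hx₂ : x₂ ∈ c.support) (hne : x₁ ≠ x₂)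
    (hvx₁ : G.Adj v x₁) (hvx₂ : G.Adj v x₂) :
    nbrEdgeCount G v c % 2 = c.length % 2 := by
  obtain ⟨c₁, c₂, rfl⟩ := mem_support_iff_exists_append.mp hx₁
  have hrot : IsArcPair (c₁.append c₂) c₂ c₁ := IsArcPair.symm ⟨hc, rfl, fun _ => Iff.rfl⟩
  obtain ⟨q, r, hqr⟩ := mem_support_iff_exists_append.mp ((hrot.2.2 x₂).mpr hx₂)
  replace hrot : IsArcPair (c₁.append c₂) q r := by rwa [IsArcPair, ← hqr]
  have h₁ := nbrEdgeCount_mod_two_of_isArcPair hmin hv hspread hrot hne hvx₁ hvx₂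
  have h₂ := nbrEdgeCount_mod_two_of_isArcPair hmin hv hspread hrot.symm hne.symm hvx₂ hvx₁
  have hcount := congrArg (nbrEdgeCount G v) hqr
  have hlen := congrArg length hqr
  simp only [nbrEdgeCount_append, length_append] at hcount hlen ⊢
  omega

lemma isSpreadOver_of_four_le {c : G.Walk u u}
    (h4 : 4 ≤ {w | w ∈ c.support ∧ G.Adj v w}.ncard) : IsSpreadOver G v c := by
  classical
  intro a b p hp _
  by_contra! h
  have hsub : {w | w ∈ c.support ∧ G.Adj v w} ⊆ (p.support.toFinset : Set V) :=
    fun w hw => by simpa using h w hw.1 hw.2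
  have hcard :=
    (Set.ncard_le_ncard hsub (Finset.finite_toSet _)).trans_eq (Set.ncard_coe_finset _)
  have := p.support.toFinset_card_le
  simp only [length_support] at this
  omega

lemma isSpreadOver_of_even {c : G.Walk u u} (heven : Even c.length) {x₁ x₂ : V}
    (hx₁ : x₁ ∈ c.support) (hx₂ : x₂ ∈ c.support) (hne : x₁ ≠ x₂) (hvx₁ : G.Adj v x₁)
    (hvx₂ : G.Adj v x₂) (hx : ¬ G.Adj x₁ x₂) : IsSpreadOver G v c := by
  intro a b p hp hodd
  have h1 : p.length = 1 := by
    obtain ⟨k, hk⟩ := heven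
    obtain ⟨m, hm⟩ := hodd
    omega
  by_contra! h
  cases p with
  | nil => simp at h1
  | cons hab p' =>
    cases p' with
    | cons => simp at h1
    | nil =>
      have h₁ := h x₁ hx₁ hvx₁
      have h₂ := h x₂ hx₂ hvx₂
      simp only [support_cons, support_nil, List.mem_cons, List.mem_nil_iff, or_false] at h₁ h₂
      rcases h₁ with rfl | rfl <;> rcases h₂ with rfl | rfl
      exacts [hne rfl, hx hab, hx hab.symm, hne rfl]

lemma IsHole.ncard_nbrs_le_two {c : G.Walk u u} (hc : IsHole G c) (hv : v ∈ c.support) :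
    {w | w ∈ c.support ∧ G.Adj v w}.ncard ≤ 2 := by
  have htwo := hc.1.ncard_neighborSet_toSubgraph_eq_two hv
  have hsub : {w | w ∈ c.support ∧ G.Adj v w} ⊆ c.toSubgraph.neighborSet v :=
    fun w hw => hc.2.2 v w hv hw.1 hw.2
  exact htwo ▸ Set.ncard_le_ncard hsub (Set.finite_of_ncard_ne_zero (by omega))

namespace Pyramid

variable (P : Pyramid G)

lemma pairwise_ne : P.apex ≠ P.b1 ∧ P.apex ≠ P.b2 ∧ P.apex ≠ P.b3 ∧ P.b1 ≠ P.b2 ∧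
    P.b1 ≠ P.b3 ∧ P.b2 ≠ P.b3 := by
  have := P.distinct
  simp only [List.nodup_cons, List.mem_cons, List.not_mem_nil, or_false,
    not_or, List.nodup_nil] at this
  tauto

def swap12 : Pyramid G where
  apex := P.apex
  b1 := P.b2
  b2 := P.b1
  b3 := P.b3
  P1 := P.P2
  P2 := P.P1
  P3 := P.P3
  distinct := by
    have := P.pairwise_ne
    simp only [List.nodup_cons, List.mem_cons, List.not_mem_nil, or_false,
      not_or, List.nodup_nil]
    tauto
  isPath1 := P.isPath2
  isPath2 := P.isPath1
  isPath3 := P.isPath3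
  induced1 := P.induced2
  induced2 := P.induced1
  induced3 := P.induced3
  adj12 := P.adj12.symm
  adj13 := P.adj23
  adj23 := P.adj13
  twoLong := by have := P.twoLong; omega
  disj12 := Set.inter_comm _ _ ▸ P.disj12
  disj13 := P.disj23
  disj23 := P.disj13
  edges12 x y hx hy hxa hya hadj := (P.edges12 y x hy hx hya hxa hadj.symm).symm
  edges13 := P.edges23
  edges23 := P.edges13

def swap23 : Pyramid G where
  apex := P.apex
  b1 := P.b1
  b2 := P.b3
  b3 := P.b2
  P1 := P.P1
  P2 := P.P3
  P3 := P.P2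
  distinct := by
    have := P.pairwise_ne
    simp only [List.nodup_cons, List.mem_cons, List.not_mem_nil, or_false,
      not_or, List.nodup_nil]
    tauto
  isPath1 := P.isPath1
  isPath2 := P.isPath3
  isPath3 := P.isPath2
  induced1 := P.induced1
  induced2 := P.induced3
  induced3 := P.induced2
  adj12 := P.adj13
  adj13 := P.adj12
  adj23 := P.adj23.symm
  twoLong := by have := P.twoLong; omega
  disj12 := P.disj13
  disj13 := P.disj12
  disj23 := Set.inter_comm _ _ ▸ P.disj23
  edges12 := P.edges13
  edges13 := P.edges12
  edges23 x y hx hy hxa hya hadj := (P.edges23 y x hy hx hya hxa hadj.symm).symm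

lemma length_hole : P.hole.length = P.P1.length + P.P2.length + 1 := by
  rw [hole, length_append, length_cons, length_reverse, Nat.add_assoc]

lemma mem_support_hole {w : V} : w ∈ P.hole.support ↔ w ∈ P.P1.support ∨ w ∈ P.P2.support := by
  simp only [hole, mem_support_append_iff, support_cons, List.mem_cons, support_reverse,
    List.mem_reverse]
  constructor
  · rintro (h | rfl | h)
    exacts [Or.inl h, Or.inl P.P1.end_mem_support, Or.inr h]
  · rintro (h | h)
    exacts [Or.inl h, Or.inr (Or.inr h)]

lemma eq_apex_of_mem_P1_P2 {w : V} (h₁ : w ∈ P.P1.support) (h₂ : w ∈ P.P2.support) :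
    w = P.apex := by
  simpa using P.disj12.subset ⟨h₁, h₂⟩

lemma isCycle_hole : P.hole.IsCycle := by
  obtain ⟨ha1, ha2, -⟩ := P.pairwise_ne
  have hb₁ : P.b1 ∉ P.P2.reverse.support := by
    simpa using fun h => ha1 (P.eq_apex_of_mem_P1_P2 P.P1.end_mem_support h).symm
  refine P.isPath1.isCycle_append ((cons_isPath_iff _ _).mpr ⟨P.isPath2.reverse, hb₁⟩)
    (List.disjoint_left.mpr fun w hw₁ hw₂ => ?_) (Or.inr ?_)
  · have hw₂' : w ∈ P.P2.support := by simpa using hw₂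
    have hw := P.eq_apex_of_mem_P1_P2 (List.mem_of_mem_tail hw₁) hw₂'
    rw [hw, ← P.P1.cons_tail_support] at hw₁
    exact (List.nodup_cons.mp (P.P1.cons_tail_support ▸ P.isPath1.support_nodup)).1 hw₁
  · have := not_nil_iff_lt_length.mp (not_nil_of_ne ha2 : ¬ P.P2.Nil)
    rw [length_cons, length_reverse]
    omega

lemma isInducedWalk_hole : IsInducedWalk G P.hole := by
  have h₁ : ∀ a b, a ∈ P.P1.support → b ∈ P.P1.support → G.Adj a b → s(a, b) ∈ P.hole.edges :=
    fun a b ha hb hab => by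
      simp [hole, adj_toSubgraph_iff_mem_edges.mp (P.induced1 a b ha hb hab)]
  have h₂ : ∀ a b, a ∈ P.P2.support → b ∈ P.P2.support → G.Adj a b → s(a, b) ∈ P.hole.edges :=
    fun a b ha hb hab => by
      simp [hole, adj_toSubgraph_iff_mem_edges.mp (P.induced2 a b ha hb hab)]
  have h₁₂ : ∀ a b, a ∈ P.P1.support → b ∈ P.P2.support → G.Adj a b →
      s(a, b) ∈ P.hole.edges := by
    intro a b ha hb hab
    by_cases haa : a = P.apex
    · rw [haa] at hab ⊢
      exact h₂ _ _ P.P2.start_mem_support hb hab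
    by_cases hba : b = P.apex
    · rw [hba] at hab ⊢
      exact h₁ _ _ ha P.P1.start_mem_support hab
    obtain ⟨rfl, rfl⟩ := P.edges12 a b ha hb haa hba hab
    simp [hole]
  intro a b ha hb hab
  rw [adj_toSubgraph_iff_mem_edges]
  rcases P.mem_support_hole.mp ha with ha | ha <;> rcases P.mem_support_hole.mp hb with hb | hb
  · exact h₁ a b ha hb hab
  · exact h₁₂ a b ha hb hab
  · exact Sym2.eq_swap ▸ h₁₂ b a hb ha hab.symm
  · exact h₂ a b ha hb hab

lemma isHole_hole (h4 : 4 ≤ P.hole.length) : IsHole G P.hole :=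
  ⟨P.isCycle_hole, h4, P.isInducedWalk_hole⟩

lemma nbrEdgeCount_hole (hb : ¬ (G.Adj v P.b1 ∧ G.Adj v P.b2)) :
    nbrEdgeCount G v P.hole = nbrEdgeCount G v P.P1 + nbrEdgeCount G v P.P2 := by
  rw [hole, nbrEdgeCount_append, nbrEdgeCount_cons_of_not_adj _ _ hb, nbrEdgeCount_reverse]

lemma ncard_nbrs_hole_le_three (hv : v ∈ P.P3.support) (hva : v ≠ P.apex) :
    {w | w ∈ P.hole.support ∧ G.Adj v w}.ncard ≤ 3 := by
  classical
  have hsub : {w | w ∈ P.hole.support ∧ G.Adj v w} ⊆ ({P.apex, P.b1, P.b2} : Finset V) := by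
    rintro w ⟨hw, hvw⟩
    by_cases hwa : w = P.apex
    · simp [hwa]
    rcases P.mem_support_hole.mp hw with hw | hw
    · simp [(P.edges13 w v hw hv hwa hva hvw.symm).1]
    · simp [(P.edges23 w v hw hv hwa hva hvw.symm).1]
  exact (Set.ncard_le_ncard hsub (Finset.finite_toSet _)).trans
    ((Set.ncard_coe_finset _).trans_le Finset.card_le_three)

lemma nbrEdgeCount_P1_add_P2_mod_two
    (hmin : ∀ (w : V) (d : G.Walk w w), IsOddHole G d → P.hole.length ≤ d.length)
    (h4 : 4 ≤ P.hole.length) (hv : v ∉ P.hole.support)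
    (heven_or_four : Even P.hole.length ∨ 4 ≤ {w | w ∈ P.hole.support ∧ G.Adj v w}.ncard)
    {x₁ x₂ : V} (hx₁ : x₁ ∈ P.P1.support) (hx₁a : x₁ ≠ P.apex) (hx₂ : x₂ ∈ P.P2.support)
    (hx₂a : x₂ ≠ P.apex) (hvx₁ : G.Adj v x₁) (hvx₂ : G.Adj v x₂)
    (hb : ¬ (G.Adj v P.b1 ∧ G.Adj v P.b2)) :
    (nbrEdgeCount G v P.P1 + nbrEdgeCount G v P.P2) % 2 = P.hole.length % 2 := by
  have hne : x₁ ≠ x₂ := fun h => hx₁a (P.eq_apex_of_mem_P1_P2 hx₁ (h ▸ hx₂))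
  have hnadj : ¬ G.Adj x₁ x₂ := fun h => by
    obtain ⟨rfl, rfl⟩ := P.edges12 _ _ hx₁ hx₂ hx₁a hx₂a h
    exact hb ⟨hvx₁, hvx₂⟩
  have hx₁' : x₁ ∈ P.hole.support := P.mem_support_hole.mpr (Or.inl hx₁)
  have hx₂' : x₂ ∈ P.hole.support := P.mem_support_hole.mpr (Or.inr hx₂)
  have hspread : IsSpreadOver G v P.hole := heven_or_four.elim
    (fun he => isSpreadOver_of_even he hx₁' hx₂' hne hvx₁ hvx₂ hnadj) isSpreadOver_of_four_le
  rw [← P.nbrEdgeCount_hole hb]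
  exact (P.isHole_hole h4).nbrEdgeCount_mod_two hmin hv hspread hx₁' hx₂' hne hvx₁ hvx₂

lemma length_swap12_hole : P.swap12.hole.length = P.hole.length := by
  rw [length_hole, length_hole]
  exact congrArg (· + 1) (Nat.add_comm _ _)

lemma mem_support_swap12_hole {w : V} : w ∈ P.swap12.hole.support ↔ w ∈ P.hole.support :=
  P.swap12.mem_support_hole.trans (or_comm.trans P.mem_support_hole.symm)

lemma nbrEdgeCount_P1_add_P3_even
    (hmin : ∀ (w : V) (d : G.Walk w w), IsOddHole G d → P.hole.length ≤ d.length)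
    (h31 : P.P3.length < P.P1.length) (h32 : P.P3.length < P.P2.length)
    (hv : v ∉ P.hole.support) (hv₃ : v ∉ P.P3.support)
    {x₁ x₃ : V} (hx₁ : x₁ ∈ P.P1.support) (hx₁a : x₁ ≠ P.apex) (hx₃ : x₃ ∈ P.P3.support)
    (hx₃a : x₃ ≠ P.apex) (hvx₁ : G.Adj v x₁) (hvx₃ : G.Adj v x₃)
    (hb : ¬ (G.Adj v P.b1 ∧ G.Adj v P.b3)) :
    (nbrEdgeCount G v P.P1 + nbrEdgeCount G v P.P3) % 2 = 0 := by
  have hlen : P.swap23.hole.length = P.P1.length + P.P3.length + 1 := P.swap23.length_hole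
  have hP3 := not_nil_iff_lt_length.mp (not_nil_of_ne P.pairwise_ne.2.2.1 : ¬ P.P3.Nil)
  have h4 : 4 ≤ P.swap23.hole.length := by omega
  have hlt : P.swap23.hole.length < P.hole.length := by
    rw [P.length_hole]
    omega
  have heven : Even P.swap23.hole.length := by
    by_contra hodd
    have := hmin _ _ ⟨P.swap23.isHole_hole h4, Nat.not_even_iff_odd.mp hodd⟩
    omega
  have hv' : v ∉ P.swap23.hole.support := fun h => (P.swap23.mem_support_hole.mp h).elim
    (fun h => hv (P.mem_support_hole.mpr (Or.inl h))) hv₃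
  have h : (nbrEdgeCount G v P.P1 + nbrEdgeCount G v P.P3) % 2 = P.swap23.hole.length % 2 :=
    P.swap23.nbrEdgeCount_P1_add_P2_mod_two (fun w d hd => hlt.le.trans (hmin w d hd)) h4 hv'
      (Or.inl heven) hx₁ hx₁a hx₃ hx₃a hvx₁ hvx₃ hb
  rw [h, Nat.even_iff.mp heven]

end Pyramid

theorem major_misses_one_path_general (G : SimpleGraph V)
    (H : GreatPyramid G) (v : V) (hmaj : BigCMajor G H.toPyramid.hole v)
    (hbase : (({H.b1, H.b2, H.b3} : Set V) ∩ {w | G.Adj v w}).ncard ≤ 1) :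
    (∀ w ∈ H.P1.support, w ≠ H.apex → ¬ G.Adj v w) ∨
    (∀ w ∈ H.P2.support, w ≠ H.apex → ¬ G.Adj v w) ∨
    (∀ w ∈ H.P3.support, w ≠ H.apex → ¬ G.Adj v w) := by
  by_contra! hcon
  obtain ⟨⟨x₁, hx₁, hx₁a, hvx₁⟩, ⟨x₂, hx₂, hx₂a, hvx₂⟩, ⟨x₃, hx₃, hx₃a, hvx₃⟩⟩ := hcon
  obtain ⟨⟨hC, hCodd⟩, hmin⟩ := H.holeShortest
  obtain ⟨-, -, -, h12, h13, h23⟩ := H.pairwise_ne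
  have hb (b b' : V) (hb : b ∈ ({H.b1, H.b2, H.b3} : Set V))
      (hb' : b' ∈ ({H.b1, H.b2, H.b3} : Set V)) (hbb' : b ≠ b') : ¬ (G.Adj v b ∧ G.Adj v b') :=
    fun h => hbb' ((Set.ncard_le_one_iff (Set.toFinite _)).mp hbase ⟨hb, h.1⟩ ⟨hb', h.2⟩)
  have hvC : v ∉ H.hole.support := fun h => by
    have := hC.ncard_nbrs_le_two h
    have := hmaj.2
    omega
  have hvP3 : v ∉ H.P3.support := fun h => by
    have := H.ncard_nbrs_hole_le_three h (fun hva => hvC (hva ▸ H.hole.start_mem_support))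
    have := hmaj.2
    omega
  have h₁₂ := H.nbrEdgeCount_P1_add_P2_mod_two hmin hC.2.1 hvC (Or.inr hmaj.2)
    hx₁ hx₁a hx₂ hx₂a hvx₁ hvx₂ (hb _ _ (by simp) (by simp) h12)
  have h₁₃ := H.nbrEdgeCount_P1_add_P3_even hmin H.short31 H.short32 hvC hvP3
    hx₁ hx₁a hx₃ hx₃a hvx₁ hvx₃ (hb _ _ (by simp) (by simp) h13)
  have h₂₃ : (nbrEdgeCount G v H.P2 + nbrEdgeCount G v H.P3) % 2 = 0 :=
    H.swap12.nbrEdgeCount_P1_add_P3_even (H.length_swap12_hole ▸ hmin) H.short32 H.short31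
      (fun h => hvC (H.mem_support_swap12_hole.mp h)) hvP3 hx₂ hx₂a hx₃ hx₃a hvx₂ hvx₃
      (hb H.b2 H.b3 (by simp) (by simp) h23)
  have := Nat.odd_iff.mp hCodd
  omega

/-- a vertex major for a great pyramid with at most one neighbour in the
base has no neighbour in `V(Pk) \ {a}` for some `k ∈ {1,2,3}`. -/
theorem major_misses_one_path (G : SimpleGraph V)
    (hnoJewel : ∀ (w : V) (c : G.Walk w w), IsShortestOddHole G c → ¬ Jewelled G c)
    (H : GreatPyramid G) (v : V) (hmaj : BigCMajor G H.toPyramid.hole v)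
    (hbase : (({H.b1, H.b2, H.b3} : Set V) ∩ {w | G.Adj v w}).ncard ≤ 1) :
    (∀ w ∈ H.P1.support, w ≠ H.apex → ¬ G.Adj v w) ∨
    (∀ w ∈ H.P2.support, w ≠ H.apex → ¬ G.Adj v w) ∨
    (∀ w ∈ H.P3.support, w ≠ H.apex → ¬ G.Adj v w) :=
  major_misses_one_path_general G H v hmaj hbase

end SOH
end

section
/- Let G be a simple graph in which no shortest odd hole is jewelled, let H be a great pyramid in G with apex a, base {b1,b2,b3} and constituent paths P1,P2,P3, and let v be a vertex major for H having at most one neighbour in {b1,b2,b3}. Then v has neighbours in exactly two of the three sets V(P1)\{a}, V(P2)\{a}, V(P3)\{a}. -/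
open SimpleGraph

namespace SOH

variable {V : Type*}

/-!
Every step reroutes the shortest odd hole `C = a-P1-b1-b2-P2-a`: if an induced path `Q` has
nonadjacent ends and a vertex `z` off `Q` sees exactly those ends, then `z` closes `Q` into a hole
of length `|Q| + 2`, which cannot be an odd hole shorter than `C`.

Since `P3` is shorter than `P1` and `P2`, the holes `a-Pi-bi-b3-P3-a` must be even, so `|P3|` has
the other parity than `|P1|` and `|P2|`. A big major vertex `v` lies off the pyramid.

If `v` had neighbours on all three sets `V(Pi) \ {a}`, take on each `Pi` the neighbour closest to
`bi` and join two of them through a base edge; as at most one of the chosen neighbours is a base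
vertex, the ends of these paths are nonadjacent. The three paths have odd total length;
the two through `P3` are too short to be odd, so the one through `b1 b2` is odd, which forces the
chosen neighbours on `P1` and `P2` to be adjacent to `a`; then `v` has at most three neighbours
on `C`. If instead `v` had neighbours only on `P1`, they lie on a subpath `α … β` of `P1` of
length at least three, and going from `β` along `P1` to `b1`, across to `P2` or to `P3`, and back
along `P1` from `a` to `α` gives two paths whose lengths differ by `|P2| - |P3|`, which is odd;
the odd one closes through `v` into an odd hole shorter than `C`.
-/

open SimpleGraph.Walk

section InducedPath

variable {G : SimpleGraph V} {u w x y α β s t : V}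

def IsInducedPath (p : G.Walk u w) : Prop :=
  p.IsPath ∧ ∀ x y, x ∈ p.support → y ∈ p.support → G.Adj x y → s(x, y) ∈ p.edges

lemma isInducedWalk_iff {p : G.Walk u w} :
    IsInducedWalk G p ↔
      ∀ x y, x ∈ p.support → y ∈ p.support → G.Adj x y → s(x, y) ∈ p.edges := by
  simp only [IsInducedWalk, ← Subgraph.mem_edgeSet, mem_edges_toSubgraph]

lemma IsInducedPath.mem_edges {p : G.Walk u w} (hp : IsInducedPath p) (hx : x ∈ p.support)
    (hy : y ∈ p.support) (h : G.Adj x y) : s(x, y) ∈ p.edges :=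
  hp.2 x y hx hy h

lemma IsInducedPath.reverse {p : G.Walk u w} (hp : IsInducedPath p) :
    IsInducedPath p.reverse := by
  refine ⟨hp.1.reverse, fun x y hx hy h => ?_⟩
  rw [support_reverse, List.mem_reverse] at hx hy
  rw [edges_reverse, List.mem_reverse]
  exact hp.mem_edges hx hy h

lemma _root_.SimpleGraph.Walk.IsPath.eq_of_mem_support_append {p : G.Walk u x} {q : G.Walk x w}
    (hpq : (p.append q).IsPath) (hp : t ∈ p.support) (hq : t ∈ q.support) : t = x := by
  by_contra h
  exact hpq.ne_of_mem_support_of_append h hp hq rfl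

lemma IsInducedPath.of_append_right {p : G.Walk u x} {q : G.Walk x w}
    (hpq : IsInducedPath (p.append q)) : IsInducedPath q := by
  refine ⟨hpq.1.of_append_right, fun s t hs ht h => ?_⟩
  have := hpq.mem_edges (by simp [hs]) (by simp [ht]) h
  rw [edges_append, List.mem_append] at this
  refine this.resolve_left fun hp => h.ne ?_
  rw [hpq.1.eq_of_mem_support_append (p.fst_mem_support_of_mem_edges hp) hs,
    hpq.1.eq_of_mem_support_append (p.snd_mem_support_of_mem_edges hp) ht]

lemma IsInducedPath.of_append_left {p : G.Walk u x} {q : G.Walk x w}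
    (hpq : IsInducedPath (p.append q)) : IsInducedPath p := by
  have := (reverse_append p q ▸ hpq.reverse).of_append_right
  simpa using this.reverse

lemma IsInducedPath.append {p : G.Walk u x} {q : G.Walk x w} (hp : IsInducedPath p)
    (hq : IsInducedPath q) (hdisj : ∀ t ∈ p.support, t ∈ q.support → t = x)
    (hcross : ∀ s ∈ p.support, ∀ t ∈ q.support, G.Adj s t → s = x ∨ t = x) :
    IsInducedPath (p.append q) := by
  refine ⟨?_, fun s t hs ht h => ?_⟩
  · rw [isPath_def, support_append, List.nodup_append]
    refine ⟨hp.1.support_nodup, hq.1.support_nodup.sublist q.support.tail_sublist, ?_⟩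
    rintro t htp _ htq rfl
    have htq' := List.mem_of_mem_tail htq
    rw [hdisj t htp htq'] at htq
    exact (List.nodup_cons.mp (q.cons_tail_support ▸ hq.1.support_nodup)).1 htq
  rw [edges_append, List.mem_append]
  rw [mem_support_append_iff] at hs ht
  rcases hs with hs | hs <;> rcases ht with ht | ht
  · exact .inl (hp.mem_edges hs ht h)
  · rcases hcross s hs t ht h with rfl | rfl
    · exact .inr (hq.mem_edges q.start_mem_support ht h)
    · exact .inl (hp.mem_edges hs p.end_mem_support h)
  · rcases hcross t ht s hs h.symm with rfl | rfl
    · exact .inr (hq.mem_edges hs q.start_mem_support h)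
    · exact .inl (hp.mem_edges p.end_mem_support ht h)
  · exact .inr (hq.mem_edges hs ht h)

lemma IsInducedPath.cons {p : G.Walk x w} (hp : IsInducedPath p) (h : G.Adj u x)
    (hu : u ∉ p.support) (hnbr : ∀ t ∈ p.support, G.Adj u t → t = x) :
    IsInducedPath (Walk.cons h p) := by
  refine ⟨hp.1.cons hu, fun s t hs ht hst => ?_⟩
  rw [edges_cons, List.mem_cons]
  rw [support_cons, List.mem_cons] at hs ht
  rcases hs with rfl | hs <;> rcases ht with rfl | ht
  · exact absurd rfl hst.ne
  · exact .inl (by rw [hnbr t ht hst])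
  · exact .inl (by rw [hnbr s hs hst.symm, Sym2.eq_swap])
  · exact .inr (hp.mem_edges hs ht hst)

lemma IsInducedPath.eq_of_adj_start {p : G.Walk x w} {h : G.Adj u x}
    (hp : IsInducedPath (Walk.cons h p)) (ht : t ∈ p.support) (hut : G.Adj u t) : t = x := by
  simpa using hp.1.eq_snd_of_mem_edges (hp.mem_edges (by simp) (by simp [ht]) hut)

lemma _root_.SimpleGraph.Walk.IsPath.ne_of_append_append {p : G.Walk u α} {m : G.Walk α β}
    {q : G.Walk β w} (h : ((p.append m).append q).IsPath) (hm : 0 < m.length)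
    (hs : s ∈ p.support) (ht : t ∈ q.support) : s ≠ t := by
  rintro rfl
  have hβ : s = β := h.eq_of_mem_support_append (by simp [hs]) ht
  have hα : s = α := (append_assoc p m q ▸ h).eq_of_mem_support_append hs (by simp [ht])
  subst hα hβ
  have := length_eq_zero_iff.mpr (isPath_iff_nil.mp h.of_append_left.of_append_right)
  omega

lemma IsInducedPath.not_adj_of_append_append {p : G.Walk u α} {m : G.Walk α β}
    {q : G.Walk β w} (h : IsInducedPath ((p.append m).append q)) (hm : 2 ≤ m.length)
    (hs : s ∈ p.support) (ht : t ∈ q.support) : ¬ G.Adj s t := by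
  intro hst
  have hne : ∀ {s t}, s ∈ p.support → t ∈ q.support → s ≠ t :=
    h.1.ne_of_append_append (by omega)
  have he := h.mem_edges (by simp [hs]) (by simp [ht]) hst
  simp only [edges_append, List.mem_append] at he
  rcases he with (he | he) | he
  · exact hne (p.snd_mem_support_of_mem_edges he) ht rfl
  · have hpm := h.1.of_append_left
    have hsα : s = α := hpm.eq_of_mem_support_append hs (m.fst_mem_support_of_mem_edges he)
    have htβ : t = β :=
      h.1.eq_of_mem_support_append (by simp [m.snd_mem_support_of_mem_edges he]) ht
    subst hsα htβ
    have := hpm.of_append_right.length_eq_one_of_mem_edges he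
    omega
  · exact hne hs (q.fst_mem_support_of_mem_edges he) rfl

end InducedPath

section Split

variable {G : SimpleGraph V} {u w : V} {S : V → Prop}

lemma _root_.SimpleGraph.Walk.exists_split_last (p : G.Walk u w) (h : ∃ s ∈ p.support, S s) :
    ∃ x, ∃ (q : G.Walk u x) (r : G.Walk x w),
      p = q.append r ∧ S x ∧ ∀ t ∈ r.support, S t → t = x := by
  induction p with
  | nil =>
    obtain ⟨s, hs, hS⟩ := h
    rw [mem_support_nil_iff] at hs
    subst hs
    exact ⟨_, nil, nil, rfl, hS, fun t ht _ => by simpa using ht⟩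
  | cons hadj p ih =>
    by_cases hp : ∃ s ∈ p.support, S s
    · obtain ⟨x, q, r, rfl, hx, hr⟩ := ih hp
      exact ⟨x, Walk.cons hadj q, r, rfl, hx, hr⟩
    · push Not at hp
      obtain ⟨s, hs, hS⟩ := h
      rw [support_cons, List.mem_cons] at hs
      rcases hs with rfl | hs
      · refine ⟨s, nil, Walk.cons hadj p, rfl, hS, fun t ht htS => ?_⟩
        rw [support_cons, List.mem_cons] at ht
        exact ht.resolve_right fun ht => hp t ht htS
      · exact absurd hS (hp s hs)

lemma _root_.SimpleGraph.Walk.exists_split_first (p : G.Walk u w) (h : ∃ s ∈ p.support, S s) :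
    ∃ x, ∃ (q : G.Walk u x) (r : G.Walk x w),
      p = q.append r ∧ S x ∧ ∀ t ∈ q.support, S t → t = x := by
  obtain ⟨x, q, r, hp, hx, hq⟩ := p.reverse.exists_split_last (by simpa using h)
  refine ⟨x, r.reverse, q.reverse, ?_, hx, by simpa using hq⟩
  rw [← reverse_append, ← hp, reverse_reverse]

lemma _root_.SimpleGraph.Walk.mem_support_of_length_eq_one {t : V} {p : G.Walk u w}
    (hp : p.length = 1) (ht : t ∈ p.support) : t = u ∨ t = w := by
  cases p with
  | nil => simp at hp
  | cons h q =>
    cases q with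
    | nil => simpa using ht
    | cons h' q => simp at hp

end Split

section Holes

variable {G : SimpleGraph V} {a b b' x y z v : V}

lemma isOddHole_append_of_isInducedPath {Q : G.Walk x y} (hQ : IsInducedPath Q)
    (hxy : ¬ G.Adj x y) (hz : z ∉ Q.support) (hzx : G.Adj z x) (hzy : G.Adj z y)
    (hnbr : ∀ t ∈ Q.support, G.Adj z t → t = x ∨ t = y) (hodd : Odd Q.length) :
    IsOddHole G (Q.append (Walk.cons hzy.symm (Walk.cons hzx Walk.nil))) := by
  have hlen : 3 ≤ Q.length := by
    have : Q.length ≠ 1 := fun h => hxy (adj_of_length_eq_one h)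
    obtain ⟨k, hk⟩ := hodd
    omega
  have hx : x ∉ Q.support.tail := by
    have := Q.cons_tail_support ▸ hQ.1.support_nodup
    exact (List.nodup_cons.mp this).1
  have hxy' : x ≠ y := by
    rintro rfl
    have := length_eq_zero_iff.mpr (isPath_iff_nil.mp hQ.1)
    omega
  refine ⟨⟨hQ.1.isCycle_append ?_ ?_ (.inl (by omega)), by simp; omega, ?_⟩,
    by simpa using hodd.add_even even_two⟩
  · simp [hzy.ne.symm, hzx.ne, hxy'.symm]
  · simp only [support_cons, support_nil, List.tail_cons, List.disjoint_cons_right,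
      List.disjoint_nil_right, and_true]
    exact ⟨fun h => hz (List.mem_of_mem_tail h), hx⟩
  · rw [isInducedWalk_iff]
    have hmem : ∀ t, t ∈ (Q.append (Walk.cons hzy.symm (Walk.cons hzx Walk.nil))).support ↔
        t ∈ Q.support ∨ t = z := by
      intro t
      simp only [support_append, support_cons, support_nil, List.tail_cons, List.mem_append,
        List.mem_cons, List.not_mem_nil, or_false]
      exact ⟨by rintro (h | h | rfl); exacts [.inl h, .inr h, .inl Q.start_mem_support], by tauto⟩
    have hzt : ∀ t ∈ Q.support, G.Adj z t → s(z, t) = s(y, z) ∨ s(z, t) = s(z, x) := by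
      intro t ht h
      rcases hnbr t ht h with rfl | rfl
      · exact .inr rfl
      · exact .inl (Sym2.eq_swap)
    intro s t hs₀ ht₀ hst
    simp only [edges_append, edges_cons, edges_nil, List.mem_append, List.mem_cons,
      List.not_mem_nil, or_false]
    rcases (hmem s).mp hs₀ with hs | rfl <;> rcases (hmem t).mp ht₀ with ht | rfl
    · exact .inl (hQ.mem_edges hs ht hst)
    · rw [Sym2.eq_swap]
      exact .inr (hzt s hs hst.symm)
    · exact .inr (hzt t ht hst)
    · exact absurd rfl hst.ne

lemma IsShortestOddHole.length_le_of_join {c : G.Walk a a} (hc : IsShortestOddHole G c)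
    {A : G.Walk x b} {B : G.Walk b' y} (hbb' : G.Adj b b') (hA : IsInducedPath A)
    (hB : IsInducedPath B) (hdisj : ∀ t ∈ A.support, t ∉ B.support)
    (hcross : ∀ s ∈ A.support, ∀ t ∈ B.support, G.Adj s t → s = b ∧ t = b')
    (hxy : ¬ G.Adj x y) (hzA : z ∉ A.support) (hzB : z ∉ B.support) (hzx : G.Adj z x)
    (hzy : G.Adj z y) (hnbrA : ∀ t ∈ A.support, G.Adj z t → t = x)
    (hnbrB : ∀ t ∈ B.support, G.Adj z t → t = y) (hodd : Odd (A.length + B.length + 1)) :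
    c.length ≤ A.length + B.length + 3 := by
  have hbB : ∀ t ∈ B.support, G.Adj b t → t = b' :=
    fun t ht h => (hcross b A.end_mem_support t ht h).2
  have hQ := hA.append (hB.cons hbb' (hdisj b A.end_mem_support) hbB)
    (fun t hA' hB' => by
      rw [support_cons, List.mem_cons] at hB'
      exact hB'.resolve_right (hdisj t hA'))
    (fun s hs t ht h => by
      rw [support_cons, List.mem_cons] at ht
      exact ht.elim .inr fun ht => .inl (hcross s hs t ht h).1)
  have hmem : ∀ t,
      t ∈ (A.append (Walk.cons hbb' B)).support ↔ t ∈ A.support ∨ t ∈ B.support := by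
    intro t
    rw [mem_support_append_iff, support_cons, List.mem_cons]
    exact ⟨by rintro (h | rfl | h); exacts [.inl h, .inl A.end_mem_support, .inr h], by tauto⟩
  have := hc.2 _ _ (isOddHole_append_of_isInducedPath hQ hxy
    (by rw [hmem]; tauto) hzx hzy
    (fun t ht h => ((hmem t).mp ht).imp (hnbrA t · h) (hnbrB t · h))
    (by simpa [length_append, add_assoc] using hodd))
  simp only [length_append, length_cons, length_nil] at this
  omega

lemma IsHole.not_mem_support_of_bigCMajor {c : G.Walk a a} (hc : IsHole G c)
    (hv : BigCMajor G c v) : v ∉ c.support := by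
  intro hvc
  have hsub : {w | w ∈ c.support ∧ G.Adj v w} ⊆ c.toSubgraph.neighborSet v :=
    fun w hw => hc.2.2 v w hvc hw.1 hw.2
  have := Set.ncard_le_ncard hsub (c.finite_neighborSet_toSubgraph)
  rw [hc.1.ncard_neighborSet_toSubgraph_eq_two hvc] at this
  have := hv.2
  omega

lemma BigCMajor.four_le_card {c : G.Walk a a} (hv : BigCMajor G c v) {s : Finset V}
    (hs : ∀ w ∈ c.support, G.Adj v w → w ∈ s) : 4 ≤ s.card := by
  calc 4 ≤ {w | w ∈ c.support ∧ G.Adj v w}.ncard := hv.2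
    _ ≤ (s : Set V).ncard := Set.ncard_le_ncard (fun w hw => hs w hw.1 hw.2) s.finite_toSet
    _ = s.card := Set.ncard_coe_finset s

lemma BigCMajor.three_le_length {c : G.Walk a a} (hv : BigCMajor G c v) {m : G.Walk x y}
    (hm : ∀ w ∈ c.support, G.Adj v w → w ∈ m.support) : 3 ≤ m.length := by
  classical
  have := hv.four_le_card (s := m.support.toFinset) fun w hw hvw =>
    List.mem_toFinset.mpr (hm w hw hvw)
  have := m.support.toFinset_card_le
  rw [length_support] at this
  omega

lemma IsShortestOddHole.reverse {c : G.Walk a a} (hc : IsShortestOddHole G c) :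
    IsShortestOddHole G c.reverse := by
  obtain ⟨⟨⟨hcyc, hlen, hind⟩, hodd⟩, hmin⟩ := hc
  refine ⟨⟨⟨hcyc.reverse, by rwa [length_reverse], ?_⟩, by rwa [length_reverse]⟩,
    fun w d hd => by rw [length_reverse]; exact hmin w d hd⟩
  intro x y hx hy h
  rw [support_reverse, List.mem_reverse] at hx hy
  rw [toSubgraph_reverse]
  exact hind x y hx hy h

lemma BigCMajor.reverse {c : G.Walk a a} (hv : BigCMajor G c v) : BigCMajor G c.reverse v := by
  simpa [BigCMajor, CMajor, toSubgraph_reverse] using hv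

end Holes

section Legs

variable {G : SimpleGraph V} {a b b' w x y z α β v : V}

def MeetsLeg (v : V) (p : G.Walk a b) : Prop :=
  ∃ w ∈ p.support, w ≠ a ∧ G.Adj v w

structure IsLastNbrSplit (v : V) (p : G.Walk a b) (p₀ : G.Walk a x) (A : G.Walk x b) :
    Prop where
  eq_append : p = p₀.append A
  ne_start : x ≠ a
  adj : G.Adj v x
  eq_of_adj : ∀ t ∈ A.support, G.Adj v t → t = x

lemma IsLastNbrSplit.mem_support {p : G.Walk a b} {p₀ : G.Walk a x} {A : G.Walk x b}
    (h : IsLastNbrSplit v p p₀ A) {t : V} (ht : t ∈ A.support) : t ∈ p.support := by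
  simp [h.eq_append, ht]

lemma _root_.SimpleGraph.Walk.IsPath.exists_isLastNbrSplit {p : G.Walk a b} (hp : p.IsPath)
    (h : MeetsLeg v p) : ∃ x, ∃ (p₀ : G.Walk a x) (A : G.Walk x b), IsLastNbrSplit v p p₀ A := by
  obtain ⟨x, p₀, A, rfl, ⟨hxa, hvx⟩, hA⟩ := p.exists_split_last (S := fun t => t ≠ a ∧ G.Adj v t)
    (by obtain ⟨w, hw, hwa, hvw⟩ := h; exact ⟨w, hw, hwa, hvw⟩)
  refine ⟨x, p₀, A, rfl, hxa, hvx, fun t ht hvt => hA t ht ⟨?_, hvt⟩⟩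
  rintro rfl
  exact hxa (hp.eq_of_mem_support_append p₀.start_mem_support ht).symm

/-- `p` and `q` relate like two constituent paths of a pyramid with apex `a` and base vertices
`b`, `b'`. -/
structure IsLegPair (p : G.Walk a b) (q : G.Walk a b') : Prop where
  induced_left : IsInducedPath p
  induced_right : IsInducedPath q
  eq_of_mem : ∀ t ∈ p.support, t ∈ q.support → t = a
  eq_of_adj : ∀ s t, s ∈ p.support → t ∈ q.support → s ≠ a → t ≠ a → G.Adj s t → s = b ∧ t = b'

variable {p : G.Walk a b} {q : G.Walk a b'} {c : G.Walk w w}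

lemma IsLegPair.length_le_of_tails (hL : IsLegPair p q) (hc : IsShortestOddHole G c)
    (hbb' : G.Adj b b') {p₀ : G.Walk a x} {A : G.Walk x b} {q₀ : G.Walk a y} {B : G.Walk y b'}
    (hA : IsLastNbrSplit z p p₀ A) (hB : IsLastNbrSplit z q q₀ B)
    (hzb : ¬ (G.Adj z b ∧ G.Adj z b')) (hzA : z ∉ A.support) (hzB : z ∉ B.support)
    (hodd : Odd (A.length + B.length + 1)) : c.length ≤ A.length + B.length + 3 := by
  obtain ⟨rfl, hxa, hzx, hnbrA⟩ := hA
  obtain ⟨rfl, hya, hzy, hnbrB⟩ := hB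
  have haA : a ∉ A.support := fun h =>
    hxa (hL.induced_left.1.eq_of_mem_support_append p₀.start_mem_support h).symm
  have haB : a ∉ B.support := fun h =>
    hya (hL.induced_right.1.eq_of_mem_support_append q₀.start_mem_support h).symm
  have hxy : ¬ G.Adj x y := fun h => by
    obtain ⟨rfl, rfl⟩ := hL.eq_of_adj x y (by simp) (by simp) hxa hya h
    exact hzb ⟨hzx, hzy⟩
  have := hc.length_le_of_join hbb' hL.induced_left.of_append_right
    hL.induced_right.of_append_right.reverse
    (fun t hA hB => by
      rw [support_reverse, List.mem_reverse] at hB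
      exact haA (hL.eq_of_mem t (by simp [hA]) (by simp [hB]) ▸ hA))
    (fun s hs t ht h => by
      rw [support_reverse, List.mem_reverse] at ht
      exact hL.eq_of_adj s t (by simp [hs]) (by simp [ht]) (ne_of_mem_of_not_mem hs haA)
        (ne_of_mem_of_not_mem ht haB) h)
    hxy hzA (by simpa using hzB) hzx hzy hnbrA (by simpa using hnbrB) (by simpa using hodd)
  simpa using this

lemma IsLegPair.length_le_of_even (hL : IsLegPair p q) (hc : IsShortestOddHole G c)
    (hbb' : G.Adj b b') (hb : a ≠ b) (hb' : a ≠ b') (hlen : 2 ≤ p.length)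
    (heven : Even (p.length + q.length)) : c.length ≤ p.length + q.length + 1 := by
  obtain ⟨x, hax, A, rfl⟩ := not_nil_iff.mp (not_nil_of_ne (p := p) hb)
  obtain ⟨y, hay, B, rfl⟩ := not_nil_iff.mp (not_nil_of_ne (p := q) hb')
  have haA : a ∉ A.support := ((cons_isPath_iff _ _).mp hL.induced_left.1).2
  have haB : a ∉ B.support := ((cons_isPath_iff _ _).mp hL.induced_right.1).2
  have hab : ¬ G.Adj a b := fun h => by
    have := hL.induced_left.1.length_eq_one_of_mem_edges
      (hL.induced_left.mem_edges (start_mem_support _) (end_mem_support _) h)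
    omega
  have := hL.length_le_of_tails hc hbb' (p₀ := Walk.cons hax Walk.nil)
    (q₀ := Walk.cons hay Walk.nil)
    ⟨rfl, hax.ne.symm, hax, fun t ht h => hL.induced_left.eq_of_adj_start ht h⟩
    ⟨rfl, hay.ne.symm, hay, fun t ht h => hL.induced_right.eq_of_adj_start ht h⟩
    (fun h => hab h.1) haA haB (by
      simp only [length_cons, Nat.even_iff] at heven hlen
      rw [Nat.odd_iff]
      omega)
  simp only [length_cons]
  omega

lemma IsLegPair.isInducedPath_reverse_append (hL : IsLegPair p q) {T : G.Walk a α}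
    {r : G.Walk α b} (hp : p = T.append r) (hbT : b ∉ T.support) :
    IsInducedPath (q.reverse.append T) := by
  subst hp
  refine hL.induced_right.reverse.append hL.induced_left.of_append_left
    (fun t hq hT => hL.eq_of_mem t (by simp [hT]) (by simpa using hq)) fun s hs t ht h => ?_
  rw [support_reverse, List.mem_reverse] at hs
  by_contra! hst
  obtain ⟨rfl, -⟩ := hL.eq_of_adj t s (by simp [ht]) hs hst.2 hst.1 h.symm
  exact hbT ht

lemma IsLegPair.length_le_of_detour (hL : IsLegPair p q) (hc : IsShortestOddHole G c)
    (hbb' : G.Adj b b') {T : G.Walk a α} {m : G.Walk α β} {D : G.Walk β b}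
    (hp : p = (T.append m).append D) (hm : 2 ≤ m.length) (hzp : z ∉ p.support)
    (hzq : z ∉ q.support) (hzα : G.Adj z α) (hzβ : G.Adj z β)
    (hnbrT : ∀ t ∈ T.support, G.Adj z t → t = α) (hnbrD : ∀ t ∈ D.support, G.Adj z t → t = β)
    (hnbrq : ¬ MeetsLeg z q) (hodd : Odd (D.length + q.length + T.length + 1)) :
    c.length ≤ D.length + q.length + T.length + 3 := by
  subst hp
  have hP := hL.induced_left
  have hsep : ∀ s ∈ T.support, ∀ t ∈ D.support, ¬ G.Adj s t :=
    fun s hs t ht => hP.not_adj_of_append_append hm hs ht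
  have hne : ∀ s ∈ T.support, ∀ t ∈ D.support, s ≠ t :=
    fun s hs t ht => hP.1.ne_of_append_append (by omega) hs ht
  have hTp : ∀ t ∈ T.support, t ∈ ((T.append m).append D).support := fun t ht => by simp [ht]
  have hDp : ∀ t ∈ D.support, t ∈ ((T.append m).append D).support := fun t ht => by simp [ht]
  have hX := hL.isInducedPath_reverse_append (append_assoc T m D).symm
    fun h => hne b h b D.end_mem_support rfl
  have hmemX : ∀ t, t ∈ (q.reverse.append T).support ↔ t ∈ q.support ∨ t ∈ T.support := by
    intro t
    rw [mem_support_append_iff, support_reverse, List.mem_reverse]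
  have haT : a ∈ T.support := T.start_mem_support
  have := hc.length_le_of_join hbb' hP.of_append_right hX
    (fun t hD hX => ((hmemX t).mp hX).elim
      (fun hq => hne a haT t hD (hL.eq_of_mem t (hDp t hD) hq).symm)
      (fun hT => hne t hT t hD rfl))
    (fun s hs t ht h => ((hmemX t).mp ht).elim
      (fun hq => hL.eq_of_adj s t (hDp s hs) hq (hne a haT s hs).symm
        (fun hta => hsep t (hta ▸ haT) s hs h.symm) h)
      (fun hT => absurd h.symm (hsep t hT s hs)))
    (fun h => hsep α T.end_mem_support β D.start_mem_support h.symm)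
    (fun h => hzp (hDp z h)) (fun h => ((hmemX z).mp h).elim hzq fun hT => hzp (hTp z hT))
    hzβ hzα hnbrD
    (fun t ht h => ((hmemX t).mp ht).elim
      (fun hq => by
        by_cases hta : t = a
        · exact hnbrT t (hta ▸ haT) h
        · exact absurd ⟨t, hq, hta, h⟩ hnbrq)
      (fun hT => hnbrT t hT h))
    (by simpa [length_append, add_assoc] using hodd)
  simp only [length_append, length_reverse] at this
  omega

end Legs

namespace Pyramid

variable {G : SimpleGraph V} (H : Pyramid G)

lemma pairwise_ne_s12 : H.apex ≠ H.b1 ∧ H.apex ≠ H.b2 ∧ H.apex ≠ H.b3 ∧ H.b1 ≠ H.b2 ∧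
    H.b1 ≠ H.b3 ∧ H.b2 ≠ H.b3 := by
  have := H.distinct
  simp only [List.nodup_cons, List.mem_cons, List.not_mem_nil, or_false, List.nodup_nil,
    and_true, not_or] at this
  tauto

lemma legs12 : IsLegPair H.P1 H.P2 :=
  ⟨⟨H.isPath1, isInducedWalk_iff.mp H.induced1⟩, ⟨H.isPath2, isInducedWalk_iff.mp H.induced2⟩,
    fun _ h1 h2 => H.disj12.subset ⟨h1, h2⟩, H.edges12⟩

lemma legs13 : IsLegPair H.P1 H.P3 :=
  ⟨⟨H.isPath1, isInducedWalk_iff.mp H.induced1⟩, ⟨H.isPath3, isInducedWalk_iff.mp H.induced3⟩,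
    fun _ h1 h2 => H.disj13.subset ⟨h1, h2⟩, H.edges13⟩

lemma legs23 : IsLegPair H.P2 H.P3 :=
  ⟨⟨H.isPath2, isInducedWalk_iff.mp H.induced2⟩, ⟨H.isPath3, isInducedWalk_iff.mp H.induced3⟩,
    fun _ h1 h2 => H.disj23.subset ⟨h1, h2⟩, H.edges23⟩

lemma mem_support_hole_s12 {w : V} :
    w ∈ H.hole.support ↔ w ∈ H.P1.support ∨ w ∈ H.P2.support := by
  rw [hole, mem_support_append_iff, support_cons, List.mem_cons, support_reverse,
    List.mem_reverse]
  exact ⟨by rintro (h | rfl | h); exacts [.inl h, .inl H.P1.end_mem_support, .inr h], by tauto⟩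

lemma length_hole_s12 : H.hole.length = H.P1.length + H.P2.length + 1 := by
  simp only [hole, length_append, length_cons, length_reverse]
  omega

def flip : Pyramid G where
  apex := H.apex
  b1 := H.b2
  b2 := H.b1
  b3 := H.b3
  P1 := H.P2
  P2 := H.P1
  P3 := H.P3
  distinct := by
    have := H.pairwise_ne_s12
    simp only [List.nodup_cons, List.mem_cons, List.not_mem_nil, or_false, List.nodup_nil,
      and_true, not_or]
    tauto
  isPath1 := H.isPath2
  isPath2 := H.isPath1
  isPath3 := H.isPath3
  induced1 := H.induced2
  induced2 := H.induced1
  induced3 := H.induced3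
  adj12 := H.adj12.symm
  adj13 := H.adj23
  adj23 := H.adj13
  twoLong := by rcases H.twoLong with h | h | h <;> tauto
  disj12 := by rw [Set.inter_comm]; exact H.disj12
  disj13 := H.disj23
  disj23 := H.disj13
  edges12 := fun x y hx hy hxa hya h => (H.edges12 y x hy hx hya hxa h.symm).symm
  edges13 := H.edges23
  edges23 := H.edges13

lemma flip_hole : H.flip.hole = H.hole.reverse := by
  show H.P2.append (Walk.cons H.adj12.symm H.P1.reverse) = _
  rw [hole, reverse_append, reverse_cons, reverse_reverse, ← append_assoc]
  rfl

end Pyramid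

namespace GreatPyramid

variable {G : SimpleGraph V} (H : GreatPyramid G) {v x y u : V}

def flip : GreatPyramid G where
  toPyramid := H.toPyramid.flip
  holeShortest := H.toPyramid.flip_hole ▸ H.holeShortest.reverse
  short31 := H.short32
  short32 := H.short31

lemma bigCMajor_flip (hv : BigCMajor G H.hole v) : BigCMajor G H.flip.hole v :=
  H.toPyramid.flip_hole ▸ hv.reverse

lemma length_P3_pos : 0 < H.P3.length :=
  Nat.pos_of_ne_zero fun h => H.pairwise_ne_s12.2.2.1 (eq_of_length_eq_zero h)

lemma odd_length_P1_add_P3 : Odd (H.P1.length + H.P3.length) := by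
  by_contra h
  have := H.legs13.length_le_of_even H.holeShortest H.adj13 H.pairwise_ne_s12.1
    H.pairwise_ne_s12.2.2.1 (by have := H.short31; have := H.length_P3_pos; omega)
    (Nat.not_odd_iff_even.mp h)
  have := H.length_hole_s12
  have := H.short32
  omega

lemma odd_length_P2_add_P3 : Odd (H.P2.length + H.P3.length) :=
  H.flip.odd_length_P1_add_P3

lemma not_mem_P1_P2 (hv : BigCMajor G H.hole v) : v ∉ H.P1.support ∧ v ∉ H.P2.support := by
  have := H.holeShortest.1.1.not_mem_support_of_bigCMajor hv
  rw [Pyramid.mem_support_hole_s12] at this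
  tauto

lemma not_mem_P3 (hv : BigCMajor G H.hole v) : v ∉ H.P3.support := by
  classical
  intro hv3
  have hva : v ≠ H.apex := fun h => (H.not_mem_P1_P2 hv).1 (h ▸ H.P1.start_mem_support)
  have := hv.four_le_card (s := {H.apex, H.b1, H.b2}) fun w hw hvw => by
    by_cases hwa : w = H.apex
    · simp [hwa]
    rcases (H.mem_support_hole_s12).mp hw with h | h
    · simp [(H.legs13.eq_of_adj w v h hv3 hwa hva hvw.symm).1]
    · simp [(H.legs23.eq_of_adj w v h hv3 hwa hva hvw.symm).1]
  have := Finset.card_le_three (a := H.apex) (b := H.b1) (c := H.b2)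
  omega

lemma length_eq_one_of_isLastNbrSplit (hv : BigCMajor G H.hole v)
    (h12 : ¬ (G.Adj v H.b1 ∧ G.Adj v H.b2)) (h13 : ¬ (G.Adj v H.b1 ∧ G.Adj v H.b3))
    (h23 : ¬ (G.Adj v H.b2 ∧ G.Adj v H.b3))
    {T1 : G.Walk H.apex x} {A : G.Walk x H.b1} {T2 : G.Walk H.apex y} {C : G.Walk y H.b2}
    {T3 : G.Walk H.apex u} {B : G.Walk u H.b3} (hA : IsLastNbrSplit v H.P1 T1 A)
    (hC : IsLastNbrSplit v H.P2 T2 C) (hB : IsLastNbrSplit v H.P3 T3 B) :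
    T1.length = 1 ∧ T2.length = 1 := by
  obtain ⟨hv1, hv2⟩ := H.not_mem_P1_P2 hv
  have hv3 := H.not_mem_P3 hv
  have hvA : v ∉ A.support := fun h => hv1 (hA.mem_support h)
  have hvB : v ∉ B.support := fun h => hv3 (hB.mem_support h)
  have hvC : v ∉ C.support := fun h => hv2 (hC.mem_support h)
  have hlen1 : H.P1.length = T1.length + A.length := by rw [hA.eq_append, length_append]
  have hlen2 : H.P2.length = T2.length + C.length := by rw [hC.eq_append, length_append]
  have hlen3 : H.P3.length = T3.length + B.length := by rw [hB.eq_append, length_append]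
  have hT1 : T1.length ≠ 0 := fun h => hA.ne_start (eq_of_length_eq_zero h).symm
  have hT2 : T2.length ≠ 0 := fun h => hC.ne_start (eq_of_length_eq_zero h).symm
  have hT3 : T3.length ≠ 0 := fun h => hB.ne_start (eq_of_length_eq_zero h).symm
  have hc := H.length_hole_s12
  have := H.short31
  have := H.short32
  have hAB : ¬ Odd (A.length + B.length + 1) := fun hodd => by
    have := H.legs13.length_le_of_tails H.holeShortest H.adj13 hA hB h13 hvA hvB hodd
    omega
  have hCB : ¬ Odd (C.length + B.length + 1) := fun hodd => by
    have := H.legs23.length_le_of_tails H.holeShortest H.adj23 hC hB h23 hvC hvB hodd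
    omega
  have := H.legs12.length_le_of_tails H.holeShortest H.adj12 hA hC h12 hvA hvC
    (by rw [Nat.odd_iff] at *; omega)
  omega

lemma not_meetsLeg_all (hv : BigCMajor G H.hole v)
    (hbase : (({H.b1, H.b2, H.b3} : Set V) ∩ {w | G.Adj v w}).ncard ≤ 1)
    (h1 : MeetsLeg v H.P1) (h2 : MeetsLeg v H.P2) (h3 : MeetsLeg v H.P3) : False := by
  classical
  obtain ⟨x, T1, A, hA⟩ := H.isPath1.exists_isLastNbrSplit h1
  obtain ⟨y, T2, C, hC⟩ := H.isPath2.exists_isLastNbrSplit h2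
  obtain ⟨u, T3, B, hB⟩ := H.isPath3.exists_isLastNbrSplit h3
  have hbase' : ∀ {s t}, s ∈ ({H.b1, H.b2, H.b3} : Set V) → t ∈ ({H.b1, H.b2, H.b3} : Set V) →
      s ≠ t → ¬ (G.Adj v s ∧ G.Adj v t) := fun hs ht hst hvst =>
    hst ((Set.ncard_le_one ((Set.toFinite _).inter_of_left _)).mp hbase _ ⟨hs, hvst.1⟩ _
      ⟨ht, hvst.2⟩)
  obtain ⟨-, -, -, h12, h13, h23⟩ := H.pairwise_ne_s12
  obtain ⟨hT1, hT2⟩ := H.length_eq_one_of_isLastNbrSplit hv (hbase' (by simp) (by simp) h12)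
    (hbase' (by simp) (by simp) h13) (hbase' (by simp) (by simp) h23) hA hC hB
  have := hv.four_le_card (s := {H.apex, x, y}) fun w hw hvw => by
    rcases (H.mem_support_hole_s12).mp hw with h | h
    · rw [hA.eq_append, mem_support_append_iff] at h
      rcases h with h | h
      · rcases mem_support_of_length_eq_one hT1 h with rfl | rfl <;> simp
      · simp [hA.eq_of_adj w h hvw]
    · rw [hC.eq_append, mem_support_append_iff] at h
      rcases h with h | h
      · rcases mem_support_of_length_eq_one hT2 h with rfl | rfl <;> simp
      · simp [hC.eq_of_adj w h hvw]
  have := Finset.card_le_three (a := H.apex) (b := x) (c := y)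
  omega

lemma meetsLeg_P2_or_P3 (hv : BigCMajor G H.hole v) : MeetsLeg v H.P2 ∨ MeetsLeg v H.P3 := by
  classical
  by_contra! h
  obtain ⟨hv1, hv2⟩ := H.not_mem_P1_P2 hv
  have hnbr : ∀ w ∈ H.hole.support, G.Adj v w → w ∈ H.P1.support := fun w hw hvw => by
    rcases (H.mem_support_hole_s12).mp hw with hw | hw
    · exact hw
    · by_cases hwa : w = H.apex
      · exact hwa ▸ H.P1.start_mem_support
      · exact absurd ⟨w, hw, hwa, hvw⟩ h.1
  have hex : ∃ w ∈ H.P1.support, G.Adj v w := by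
    by_contra! h0
    have := hv.four_le_card (s := ∅) fun w hw hvw => absurd hvw (h0 w (hnbr w hw hvw))
    simp at this
  obtain ⟨β, T, D, hP1, hβ, hD⟩ := H.P1.exists_split_last hex
  obtain ⟨α, Tα, mid, rfl, hα, hTα⟩ := T.exists_split_first ⟨β, T.end_mem_support, hβ⟩
  have hmid := hv.three_le_length (m := mid) fun w hw hvw => by
    have := hnbr w hw hvw
    rw [hP1, mem_support_append_iff, mem_support_append_iff] at this
    rcases this with (h' | h') | h'
    · exact hTα w h' hvw ▸ mid.start_mem_support
    · exact h'
    · exact hD w h' hvw ▸ mid.end_mem_support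
  have hq : ∀ {b'} {q : G.Walk H.apex b'}, IsLegPair H.P1 q → G.Adj H.b1 b' → ¬ MeetsLeg v q →
      v ∉ q.support → q.length ≤ H.P2.length → ¬ Odd (D.length + q.length + Tα.length + 1) :=
    fun hL hbb' hvq hvq' hqlen hodd => by
      have := hL.length_le_of_detour H.holeShortest hbb' hP1 (by omega) hv1 hvq' hα hβ hTα hD
        hvq hodd
      rw [H.length_hole_s12, hP1] at this
      simp only [length_append] at this
      omega
  have := hq H.legs12 H.adj12 h.1 hv2 le_rfl
  have := hq H.legs13 H.adj13 h.2 (H.not_mem_P3 hv) H.short32.le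
  have := H.odd_length_P2_add_P3
  rw [Nat.odd_iff] at *
  omega

lemma meetsLeg_P1_or_P2 (hv : BigCMajor G H.hole v) : MeetsLeg v H.P1 ∨ MeetsLeg v H.P2 := by
  classical
  by_contra! h
  have := hv.four_le_card (s := {H.apex}) fun w hw hvw => by
    by_contra hwa
    rcases (H.mem_support_hole_s12).mp hw with hw | hw
    · exact h.1 ⟨w, hw, by simpa using hwa, hvw⟩
    · exact h.2 ⟨w, hw, by simpa using hwa, hvw⟩
  simp at this

end GreatPyramid

theorem major_meets_exactly_two_paths_general (G : SimpleGraph V)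
    (H : GreatPyramid G) (v : V) (hmaj : BigCMajor G H.toPyramid.hole v)
    (hbase : (({H.b1, H.b2, H.b3} : Set V) ∩ {w | G.Adj v w}).ncard ≤ 1) :
    ((∃ w ∈ H.P1.support, w ≠ H.apex ∧ G.Adj v w) ∧
      (∃ w ∈ H.P2.support, w ≠ H.apex ∧ G.Adj v w) ∧
      (∀ w ∈ H.P3.support, w ≠ H.apex → ¬ G.Adj v w)) ∨
    ((∃ w ∈ H.P1.support, w ≠ H.apex ∧ G.Adj v w) ∧
      (∃ w ∈ H.P3.support, w ≠ H.apex ∧ G.Adj v w) ∧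
      (∀ w ∈ H.P2.support, w ≠ H.apex → ¬ G.Adj v w)) ∨
    ((∃ w ∈ H.P2.support, w ≠ H.apex ∧ G.Adj v w) ∧
      (∃ w ∈ H.P3.support, w ≠ H.apex ∧ G.Adj v w) ∧
      (∀ w ∈ H.P1.support, w ≠ H.apex → ¬ G.Adj v w)) := by
  have h12 := H.meetsLeg_P1_or_P2 hmaj
  have h13 : MeetsLeg v H.P1 ∨ MeetsLeg v H.P3 :=
    H.flip.meetsLeg_P2_or_P3 (H.bigCMajor_flip hmaj)
  have h23 := H.meetsLeg_P2_or_P3 hmaj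
  have h123 := H.not_meetsLeg_all hmaj hbase
  have hnot : ∀ {b} {p : G.Walk H.apex b}, ¬ MeetsLeg v p →
      ∀ w ∈ p.support, w ≠ H.apex → ¬ G.Adj v w :=
    fun h w hw hwa hvw => h ⟨w, hw, hwa, hvw⟩
  by_cases h1 : MeetsLeg v H.P1 <;> by_cases h2 : MeetsLeg v H.P2 <;> by_cases h3 : MeetsLeg v H.P3
  · exact (h123 h1 h2 h3).elim
  · exact .inl ⟨h1, h2, hnot h3⟩
  · exact .inr (.inl ⟨h1, h3, hnot h2⟩)
  · exact (h23.elim h2 h3).elim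
  · exact .inr (.inr ⟨h2, h3, hnot h1⟩)
  · exact (h13.elim h1 h3).elim
  all_goals exact (h12.elim h1 h2).elim

/-- a vertex major for a great pyramid with at most one neighbour in the
base has neighbours in exactly two of the three sets `V(Pi) \ {a}`. -/
theorem major_meets_exactly_two_paths (G : SimpleGraph V)
    (hnoJewel : ∀ (w : V) (c : G.Walk w w), IsShortestOddHole G c → ¬ Jewelled G c)
    (H : GreatPyramid G) (v : V) (hmaj : BigCMajor G H.toPyramid.hole v)
    (hbase : (({H.b1, H.b2, H.b3} : Set V) ∩ {w | G.Adj v w}).ncard ≤ 1) :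
    ((∃ w ∈ H.P1.support, w ≠ H.apex ∧ G.Adj v w) ∧
      (∃ w ∈ H.P2.support, w ≠ H.apex ∧ G.Adj v w) ∧
      (∀ w ∈ H.P3.support, w ≠ H.apex → ¬ G.Adj v w)) ∨
    ((∃ w ∈ H.P1.support, w ≠ H.apex ∧ G.Adj v w) ∧
      (∃ w ∈ H.P3.support, w ≠ H.apex ∧ G.Adj v w) ∧
      (∀ w ∈ H.P2.support, w ≠ H.apex → ¬ G.Adj v w)) ∨
    ((∃ w ∈ H.P2.support, w ≠ H.apex ∧ G.Adj v w) ∧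
      (∃ w ∈ H.P3.support, w ≠ H.apex ∧ G.Adj v w) ∧
      (∀ w ∈ H.P1.support, w ≠ H.apex → ¬ G.Adj v w)) :=
  major_meets_exactly_two_paths_general G H v hmaj hbase

end SOH
end
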